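/- arXiv:0802.1669 — 7 statements merged into one kernel-verified Lean document; each statement's English description precedes it below -/
import Mathlib

section
/- Let $a_i, b_i, c_i$ ($i=1,\dots,n$) be sequences of non-negative real numbers with $a_i = b_i + c_i$ and $a_i > 0$ for all $i$. Then for any positive integers $d$ and $n$, $\left(\frac{\sum_i a_i^{1+2/d}}{\sum_i a_i}\right)^{d/2} \le \left(\frac{\sum_i b_i^{1+2/d}}{\sum_i b_i}\right)^{d/2} + \left(\frac{\sum_i c_i^{1+2/d}}{\sum_i c_i}\right)^{d/2}$, where a term on the right is interpreted as $0$ if the corresponding denominator is $0$. -/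
/-!
Write `p = 1 + 1/q` and let `B`, `C` be the values of `(∑ xᵢ ^ p / ∑ xᵢ) ^ q` at `x = b`, `x = c`,
so that `B ^ (p - 1) = ∑ bᵢ ^ p / ∑ bᵢ`. With `K = B + C`, convexity of `t ↦ t ^ p` applied to
`bᵢ + cᵢ = (B/K) (K bᵢ/B) + (C/K) (K cᵢ/C)` gives
`(bᵢ + cᵢ) ^ p ≤ K ^ (p - 1) (bᵢ ^ p / B ^ (p - 1) + cᵢ ^ p / C ^ (p - 1))`.
Summing over `i` gives `∑ (bᵢ + cᵢ) ^ p ≤ K ^ (p - 1) ∑ (bᵢ + cᵢ)`, and raising the quotient to the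
power `q = 1 / (p - 1)` gives `≤ K`.
-/

open Finset

lemma inv_mul_mul_rpow {t x : ℝ} (ht : 0 < t) (hx : 0 ≤ x) (p : ℝ) :
    t⁻¹ * (t * x) ^ p = t ^ (p - 1) * x ^ p := by
  rw [Real.mul_rpow ht.le hx, Real.rpow_sub_one ht.ne']
  field_simp

lemma add_rpow_le_mul_add_div_rpow {p x y B C : ℝ} (hp : 1 ≤ p) (hx : 0 ≤ x) (hy : 0 ≤ y)
    (hB : 0 < B) (hC : 0 < C) :
    (x + y) ^ p ≤ (B + C) ^ (p - 1) * (x ^ p / B ^ (p - 1) + y ^ p / C ^ (p - 1)) := by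
  set K := B + C with hK_def
  have hK : 0 < K := add_pos hB hC
  have hJensen := (convexOn_rpow hp).2 (Set.mem_Ici.2 (by positivity : 0 ≤ K / B * x))
    (Set.mem_Ici.2 (by positivity : 0 ≤ K / C * y)) (by positivity : 0 ≤ B / K)
    (by positivity : 0 ≤ C / K) (by rw [← add_div, ← hK_def, div_self hK.ne'])
  calc (x + y) ^ p = (B / K * (K / B * x) + C / K * (K / C * y)) ^ p := by
        congr 1; field_simp
    _ ≤ B / K * (K / B * x) ^ p + C / K * (K / C * y) ^ p := hJensen
    _ = K ^ (p - 1) * (x ^ p / B ^ (p - 1) + y ^ p / C ^ (p - 1)) := by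
        rw [← inv_div K B, ← inv_div K C, inv_mul_mul_rpow (by positivity) hx,
          inv_mul_mul_rpow (by positivity) hy, Real.div_rpow hK.le hB.le,
          Real.div_rpow hK.le hC.le]
        ring

lemma sum_add_rpow_le {ι : Type*} (s : Finset ι) {p B C : ℝ} (hp : 1 ≤ p) {b c : ι → ℝ}
    (hb : ∀ i ∈ s, 0 ≤ b i) (hc : ∀ i ∈ s, 0 ≤ c i) (hB : 0 < B) (hC : 0 < C) :
    ∑ i ∈ s, (b i + c i) ^ p ≤ (B + C) ^ (p - 1) *
      ((∑ i ∈ s, b i ^ p) / B ^ (p - 1) + (∑ i ∈ s, c i ^ p) / C ^ (p - 1)) := by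
  calc ∑ i ∈ s, (b i + c i) ^ p
      ≤ ∑ i ∈ s, (B + C) ^ (p - 1) * (b i ^ p / B ^ (p - 1) + c i ^ p / C ^ (p - 1)) :=
        sum_le_sum fun i hi => add_rpow_le_mul_add_div_rpow hp (hb i hi) (hc i hi) hB hC
    _ = _ := by rw [← mul_sum, sum_add_distrib, sum_div, sum_div]

-- With `x / 0 = 0` this vanishes when `∑ xᵢ = 0`, matching the convention of the statement.
noncomputable def momentRatio {ι : Type*} (s : Finset ι) (p : ℝ) (x : ι → ℝ) : ℝ :=
  (∑ i ∈ s, x i ^ p) / ∑ i ∈ s, x i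

section momentRatio

variable {ι : Type*} {s : Finset ι} {p : ℝ} {b c : ι → ℝ}

lemma momentRatio_nonneg (hb : ∀ i ∈ s, 0 ≤ b i) : 0 ≤ momentRatio s p b :=
  div_nonneg (sum_nonneg fun i hi => Real.rpow_nonneg (hb i hi) p) (sum_nonneg hb)

lemma sum_rpow_pos_of_sum_pos (hb : ∀ i ∈ s, 0 ≤ b i) (hsum : 0 < ∑ i ∈ s, b i) :
    0 < ∑ i ∈ s, b i ^ p := by
  obtain ⟨i, hi, hbi⟩ :=
    exists_lt_of_sum_lt (f := fun _ => (0 : ℝ)) (g := b) (by simpa using hsum)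
  exact sum_pos' (fun j hj => Real.rpow_nonneg (hb j hj) p) ⟨i, hi, Real.rpow_pos_of_pos hbi p⟩

lemma momentRatio_pos (hb : ∀ i ∈ s, 0 ≤ b i) (hsum : 0 < ∑ i ∈ s, b i) :
    0 < momentRatio s p b :=
  div_pos (sum_rpow_pos_of_sum_pos hb hsum) hsum

lemma sum_rpow_div_momentRatio (h : ∑ i ∈ s, b i ^ p ≠ 0) :
    (∑ i ∈ s, b i ^ p) / momentRatio s p b = ∑ i ∈ s, b i :=
  div_div_cancel₀ h

lemma momentRatio_of_sum_eq_zero (hsum : ∑ i ∈ s, b i = 0) : momentRatio s p b = 0 := by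
  rw [momentRatio, hsum, div_zero]

lemma momentRatio_add_of_sum_eq_zero (hb : ∀ i ∈ s, 0 ≤ b i) (hsum : ∑ i ∈ s, b i = 0) :
    momentRatio s p (b + c) = momentRatio s p c := by
  have hb0 := (sum_eq_zero_iff_of_nonneg hb).1 hsum
  unfold momentRatio
  congr 1 <;> refine sum_congr rfl fun i hi => ?_ <;> simp [hb0 i hi]

lemma momentRatio_add_rpow_le_of_sum_pos {q : ℝ} (hq : 0 < q)
    (hb : ∀ i ∈ s, 0 ≤ b i) (hc : ∀ i ∈ s, 0 ≤ c i)
    (hsb : 0 < ∑ i ∈ s, b i) (hsc : 0 < ∑ i ∈ s, c i) :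
    momentRatio s (1 + q⁻¹) (b + c) ^ q ≤
      momentRatio s (1 + q⁻¹) b ^ q + momentRatio s (1 + q⁻¹) c ^ q := by
  set p := 1 + q⁻¹
  have hp : 1 ≤ p := le_add_of_nonneg_right (inv_nonneg.2 hq.le)
  have hp1 : p - 1 = q⁻¹ := add_sub_cancel_left 1 q⁻¹
  set Rb := momentRatio s p b
  set Rc := momentRatio s p c
  have hRb := momentRatio_pos (p := p) hb hsb
  have hRc := momentRatio_pos (p := p) hc hsc
  have hsum := sum_add_rpow_le s hp hb hc (Real.rpow_pos_of_pos hRb q)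
    (Real.rpow_pos_of_pos hRc q)
  rw [hp1, Real.rpow_rpow_inv hRb.le hq.ne', Real.rpow_rpow_inv hRc.le hq.ne',
    sum_rpow_div_momentRatio (sum_rpow_pos_of_sum_pos hb hsb).ne',
    sum_rpow_div_momentRatio (sum_rpow_pos_of_sum_pos hc hsc).ne', ← sum_add_distrib] at hsum
  have hratio : momentRatio s p (b + c) ≤ (Rb ^ q + Rc ^ q) ^ q⁻¹ :=
    div_le_of_le_mul₀ (sum_nonneg fun i hi => add_nonneg (hb i hi) (hc i hi))
      (by positivity) hsum
  calc momentRatio s p (b + c) ^ q ≤ ((Rb ^ q + Rc ^ q) ^ q⁻¹) ^ q :=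
        Real.rpow_le_rpow (momentRatio_nonneg fun i hi => add_nonneg (hb i hi) (hc i hi))
          hratio hq.le
    _ = Rb ^ q + Rc ^ q := Real.rpow_inv_rpow (by positivity) hq.ne'

theorem momentRatio_add_rpow_le {q : ℝ} (hq : 0 < q)
    (hb : ∀ i ∈ s, 0 ≤ b i) (hc : ∀ i ∈ s, 0 ≤ c i) :
    momentRatio s (1 + q⁻¹) (b + c) ^ q ≤
      momentRatio s (1 + q⁻¹) b ^ q + momentRatio s (1 + q⁻¹) c ^ q := by
  rcases (sum_nonneg hb).eq_or_lt with hsb | hsb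
  · rw [momentRatio_add_of_sum_eq_zero hb hsb.symm, momentRatio_of_sum_eq_zero hsb.symm,
      Real.zero_rpow hq.ne', zero_add]
  rcases (sum_nonneg hc).eq_or_lt with hsc | hsc
  · rw [add_comm b, momentRatio_add_of_sum_eq_zero hc hsc.symm,
      momentRatio_of_sum_eq_zero hsc.symm, Real.zero_rpow hq.ne', add_zero]
  exact momentRatio_add_rpow_le_of_sum_pos hq hb hc hsb hsc

end momentRatio

theorem stmt_0_general (n d : ℕ) (hd : 0 < d)
    (a b c : Fin n → ℝ)
    (hb : ∀ i, 0 ≤ b i) (hc : ∀ i, 0 ≤ c i)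
    (habc : ∀ i, a i = b i + c i) :
    ((∑ i, a i ^ (1 + 2 / (d : ℝ))) / ∑ i, a i) ^ ((d : ℝ) / 2)
      ≤ ((∑ i, b i ^ (1 + 2 / (d : ℝ))) / ∑ i, b i) ^ ((d : ℝ) / 2)
        + ((∑ i, c i ^ (1 + 2 / (d : ℝ))) / ∑ i, c i) ^ ((d : ℝ) / 2) := by
  obtain rfl : a = b + c := funext habc
  have hp : 1 + 2 / (d : ℝ) = 1 + ((d : ℝ) / 2)⁻¹ := by rw [inv_div]
  simpa only [momentRatio, hp, Pi.add_apply] using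
    momentRatio_add_rpow_le (s := univ) (by positivity : (0 : ℝ) < d / 2)
      (fun i _ => hb i) (fun i _ => hc i)

theorem stmt_0 (n d : ℕ) (hn : 0 < n) (hd : 0 < d)
    (a b c : Fin n → ℝ)
    (hb : ∀ i, 0 ≤ b i) (hc : ∀ i, 0 ≤ c i)
    (habc : ∀ i, a i = b i + c i) (ha : ∀ i, 0 < a i) :
    ((∑ i, a i ^ (1 + 2 / (d : ℝ))) / ∑ i, a i) ^ ((d : ℝ) / 2)
      ≤ ((∑ i, b i ^ (1 + 2 / (d : ℝ))) / ∑ i, b i) ^ ((d : ℝ) / 2)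
        + ((∑ i, c i ^ (1 + 2 / (d : ℝ))) / ∑ i, c i) ^ ((d : ℝ) / 2) :=
  stmt_0_general n d hd a b c hb hc habc
end

section
/- The function $f(x_1,\dots,x_n) = \left(\frac{\sum_i x_i^{1+2/d}}{\sum_i x_i}\right)^{d/2}$ is convex on the set of non-negative vectors with strictly positive sum, for any positive integers $n$ and $d$. -/
open Finset

/-! Put `c = d/2` and `p = 1 + 1/c`, so that `p * c = c + 1`. On nonnegative vectors with
`B x = ∑ xᵢ > 0` the function equals `B * (N / B) ^ (c + 1)`, where `N x = (∑ xᵢ ^ p) ^ (1/p)` is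
convex by Minkowski's inequality. This is the perspective `(u, v) ↦ v * g (u / v)` of the convex,
increasing `g u = u ^ (c + 1)`, evaluated at the convex `N` and the linear `B`; since `g` is
increasing, `N` may be replaced by the upper bound `a N x + b N y`, after which convexity of `g`
applies with the weights `a B x / B z` and `b B y / B z`. -/

theorem ConvexOn.perspective_comp {E : Type*} [AddCommGroup E] [Module ℝ E] {s : Set E}
    {g : ℝ → ℝ} {N B : E → ℝ} (hg : ConvexOn ℝ (Set.Ici 0) g)
    (hg_mono : MonotoneOn g (Set.Ici 0)) (hN : ConvexOn ℝ s N) (hN_nonneg : ∀ x ∈ s, 0 ≤ N x)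
    (hB : IsLinearMap ℝ B) (hB_pos : ∀ x ∈ s, 0 < B x) :
    ConvexOn ℝ s (fun x => B x * g (N x / B x)) := by
  refine ⟨hN.1, fun x hx y hy a b ha hb hab => ?_⟩
  have hBx := hB_pos x hx
  have hBy := hB_pos y hy
  have hBz : B (a • x + b • y) = a * B x + b * B y := by
    rw [hB.map_add, hB.map_smul, hB.map_smul, smul_eq_mul, smul_eq_mul]
  have hBz_pos : 0 < a * B x + b * B y := hBz ▸ hB_pos _ (hN.1 hx hy ha hb hab)
  have hux : N x / B x ∈ Set.Ici 0 := div_nonneg (hN_nonneg x hx) hBx.le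
  have huy : N y / B y ∈ Set.Ici 0 := div_nonneg (hN_nonneg y hy) hBy.le
  have hwx : 0 ≤ a * B x / (a * B x + b * B y) := by positivity
  have hwy : 0 ≤ b * B y / (a * B x + b * B y) := by positivity
  have hw : a * B x / (a * B x + b * B y) + b * B y / (a * B x + b * B y) = 1 := by
    field_simp
  have hsplit : (a * N x + b * N y) / (a * B x + b * B y) =
      a * B x / (a * B x + b * B y) * (N x / B x) +
        b * B y / (a * B x + b * B y) * (N y / B y) := by
    field_simp
  simp only [hBz, smul_eq_mul]
  calc (a * B x + b * B y) * g (N (a • x + b • y) / (a * B x + b * B y))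
      ≤ (a * B x + b * B y) * g ((a * N x + b * N y) / (a * B x + b * B y)) := by
        refine mul_le_mul_of_nonneg_left (hg_mono ?_ ?_ ?_) hBz_pos.le
        · exact div_nonneg (hN_nonneg _ (hN.1 hx hy ha hb hab)) hBz_pos.le
        · rw [hsplit]; exact hg.1 hux huy hwx hwy hw
        · exact div_le_div_of_nonneg_right (hN.2 hx hy ha hb hab) hBz_pos.le
    _ ≤ (a * B x + b * B y) * (a * B x / (a * B x + b * B y) * g (N x / B x) +
          b * B y / (a * B x + b * B y) * g (N y / B y)) := by
        rw [hsplit]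
        exact mul_le_mul_of_nonneg_left (hg.2 hux huy hwx hwy hw) hBz_pos.le
    _ = a * (B x * g (N x / B x)) + b * (B y * g (N y / B y)) := by
        field_simp

theorem Real.Lp_mul_of_nonneg {ι : Type*} (s : Finset ι) {p a : ℝ} (hp : p ≠ 0) (ha : 0 ≤ a)
    {x : ι → ℝ} (hx : ∀ i ∈ s, 0 ≤ x i) :
    (∑ i ∈ s, (a * x i) ^ p) ^ (1 / p) = a * (∑ i ∈ s, x i ^ p) ^ (1 / p) := by
  have hsum : ∑ i ∈ s, (a * x i) ^ p = a ^ p * ∑ i ∈ s, x i ^ p := by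
    rw [mul_sum]
    exact sum_congr rfl fun i hi => Real.mul_rpow ha (hx i hi)
  rw [hsum, Real.mul_rpow (by positivity) (sum_nonneg fun i hi => by have := hx i hi; positivity),
    ← Real.rpow_mul ha, mul_one_div_cancel hp, Real.rpow_one]

theorem Real.convexOn_Lp_nonneg {ι : Type*} [Fintype ι] {p : ℝ} (hp : 1 ≤ p) :
    ConvexOn ℝ {x : ι → ℝ | ∀ i, 0 ≤ x i} (fun x => (∑ i, x i ^ p) ^ (1 / p)) := by
  refine ⟨convex_Ici 0, fun x hx y hy a b ha hb hab => ?_⟩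
  have hax : ∀ i ∈ univ, 0 ≤ a * x i := fun i _ => mul_nonneg ha (hx i)
  have hby : ∀ i ∈ univ, 0 ≤ b * y i := fun i _ => mul_nonneg hb (hy i)
  have hp0 : p ≠ 0 := by positivity
  simpa only [Pi.add_apply, Pi.smul_apply, smul_eq_mul, Real.Lp_mul_of_nonneg _ hp0 ha
    fun i _ => hx i, Real.Lp_mul_of_nonneg _ hp0 hb fun i _ => hy i] using
    Real.Lp_add_le_of_nonneg univ hp hax hby

theorem Real.div_rpow_eq_mul_rpow_inv_div_rpow_add_one {A B c : ℝ} (hA : 0 ≤ A) (hB : 0 < B)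
    (hc : 0 < c) :
    (A / B) ^ c = B * (A ^ (1 / (1 + 1 / c)) / B) ^ (c + 1) := by
  rw [Real.div_rpow (Real.rpow_nonneg hA _) hB.le (c + 1), ← Real.rpow_mul hA,
    show 1 / (1 + 1 / c) * (c + 1) = c by field_simp, Real.rpow_add_one hB.ne',
    Real.div_rpow hA hB.le]
  field_simp

theorem convexOn_rpow_sum_rpow_div_sum {ι : Type*} [Fintype ι] {c : ℝ} (hc : 0 < c) :
    ConvexOn ℝ {x : ι → ℝ | (∀ i, 0 ≤ x i) ∧ 0 < ∑ i, x i}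
      (fun x => ((∑ i, x i ^ (1 + 1 / c)) / ∑ i, x i) ^ c) := by
  have hp : 1 ≤ 1 + 1 / c := le_add_of_nonneg_right (by positivity)
  have hsum : IsLinearMap ℝ fun x : ι → ℝ => ∑ i, x i :=
    ⟨fun x y => sum_add_distrib, fun a x => (mul_sum ..).symm⟩
  have hconv : Convex ℝ {x : ι → ℝ | (∀ i, 0 ≤ x i) ∧ 0 < ∑ i, x i} :=
    (convex_Ici 0).inter (convex_halfSpace_gt hsum 0)
  refine ((convexOn_rpow (by linarith : 1 ≤ c + 1)).perspective_comp
    (Real.monotoneOn_rpow_Ici_of_exponent_nonneg (by linarith))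
    ((Real.convexOn_Lp_nonneg hp).subset (fun x hx => hx.1) hconv)
    (fun x hx => Real.rpow_nonneg (sum_nonneg fun i _ => Real.rpow_nonneg (hx.1 i) _) _)
    hsum fun x hx => hx.2).congr fun x hx => ?_
  exact (Real.div_rpow_eq_mul_rpow_inv_div_rpow_add_one
    (sum_nonneg fun i _ => Real.rpow_nonneg (hx.1 i) _) hx.2 hc).symm

theorem stmt_1_general (n d : ℕ) (hd : 0 < d) :
    ConvexOn ℝ {x : Fin n → ℝ | (∀ i, 0 ≤ x i) ∧ 0 < ∑ i, x i}
      (fun x : Fin n → ℝ =>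
        ((∑ i, x i ^ (1 + 2 / (d : ℝ))) / ∑ i, x i) ^ ((d : ℝ) / 2)) := by
  have hc : (0 : ℝ) < d / 2 := by positivity
  simpa only [one_div_div] using convexOn_rpow_sum_rpow_div_sum (ι := Fin n) hc

theorem stmt_1 (n d : ℕ) (hn : 0 < n) (hd : 0 < d) :
    ConvexOn ℝ {x : Fin n → ℝ | (∀ i, 0 ≤ x i) ∧ 0 < ∑ i, x i}
      (fun x : Fin n → ℝ =>
        ((∑ i, x i ^ (1 + 2 / (d : ℝ))) / ∑ i, x i) ^ ((d : ℝ) / 2)) :=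
  stmt_1_general n d hd
end

section
/- Let $f$ be a probability density on $\mathbb{R}^d$ with finite second moments, bounded above by $M_f > 0$, with covariance matrix $\Sigma_f$. Then $|\Sigma_f|^{1/2} \ge \frac{\Gamma(d/2+1)}{M_f\, \{\pi(d+2)\}^{d/2}}$. -/
/-!
Write `Σ⁻¹ = BᵀB` and `q x = ‖B (x - μ)‖²`, so that `∫ q f = tr (Σ⁻¹ Σ) = d`. Let `E = {q ≤ R²}`
be the ellipsoid of volume `1 / M`. Since `0 ≤ f ≤ M`, the bathtub principle gives
`∫ q f ≥ M ∫_E q`, and the right-hand side is the second moment `d / (d + 2) R²` of the uniform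
distribution on a ball. Hence `R² ≤ d + 2`, and `vol E = |Σ|^{1/2} ω_d R^d = 1 / M`, with `ω_d`
the volume of the unit ball, turns this into the bound. `Σ` is nondegenerate because a density
cannot live on a hyperplane.
-/

open MeasureTheory Real Matrix Metric Module Set

theorem mul_setIntegral_le_integral_mul_of_sublevel {α : Type*} [MeasurableSpace α]
    {μ : Measure α} {g q : α → ℝ} {M t : ℝ} {E : Set α} (hE : MeasurableSet E)
    (hME : M * μ.real E = 1) (hg0 : ∀ x, 0 ≤ g x) (hgM : ∀ x, g x ≤ M) (hg : Integrable g μ)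
    (hg1 : ∫ x, g x ∂μ = 1) (hq0 : ∀ x, 0 ≤ q x) (hq : AEStronglyMeasurable q μ)
    (hqg : Integrable (fun x => q x * g x) μ) (hqE : ∀ x ∈ E, q x ≤ t)
    (hqEc : ∀ x ∉ E, t ≤ q x) :
    M * ∫ x in E, q x ∂μ ≤ ∫ x, q x * g x ∂μ := by
  have hμE : μ E ≠ ⊤ := fun h => by simp [measureReal_def, h] at hME
  have hqE_int : Integrable (E.indicator q) μ :=
    (Measure.integrableOn_of_bounded hμE hq <|
      (ae_restrict_mem hE).mono fun x hx => by
        rw [Real.norm_of_nonneg (hq0 x)]; exact hqE x hx).integrable_indicator hE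
  have hME_int : Integrable (E.indicator fun _ => M) μ :=
    (integrableOn_const hμE).integrable_indicator hE
  -- `(q - t) (g - M 𝟙_E) ≥ 0` pointwise, and its integral is `∫ q g - M ∫_E q`.
  have hpos : 0 ≤ ∫ x, (q x - t) * (g x - E.indicator (fun _ => M) x) ∂μ :=
    integral_nonneg fun x => by
      by_cases hx : x ∈ E
      · simp only [indicator_of_mem hx]
        exact mul_nonneg_of_nonpos_of_nonpos (by linarith [hqE x hx]) (by linarith [hgM x])
      · simp only [indicator_of_notMem hx, sub_zero]
        exact mul_nonneg (by linarith [hqEc x hx]) (hg0 x)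
  have hsplit : (fun x => (q x - t) * (g x - E.indicator (fun _ => M) x)) = fun x =>
      q x * g x - t * g x - M * E.indicator q x + t * E.indicator (fun _ => M) x := by
    ext x
    by_cases hx : x ∈ E <;> simp [hx] <;> ring
  rw [hsplit, integral_add _ (hME_int.const_mul t), integral_sub _ (hqE_int.const_mul M),
    integral_sub hqg (hg.const_mul t), integral_const_mul, integral_const_mul, integral_const_mul,
    integral_indicator hE, integral_indicator hE, setIntegral_const, hg1, smul_eq_mul,
    mul_comm _ M, hME] at hpos
  · linarith
  · exact hqg.sub (hg.const_mul t)
  · exact (hqg.sub (hg.const_mul t)).sub (hqE_int.const_mul M)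

theorem setIntegral_closedBall_norm_sq {E : Type*} [NormedAddCommGroup E] [NormedSpace ℝ E]
    [FiniteDimensional ℝ E] [Nontrivial E] [MeasurableSpace E] [BorelSpace E] (μ : Measure E)
    [μ.IsAddHaarMeasure] {R : ℝ} (hR : 0 ≤ R) :
    ∫ x in closedBall 0 R, ‖x‖ ^ 2 ∂μ
      = finrank ℝ E / (finrank ℝ E + 2) * R ^ 2 * μ.real (closedBall 0 R) := by
  have hn : 0 < finrank ℝ E := finrank_pos
  have hball : ∀ x : E, (closedBall 0 R).indicator (fun x => ‖x‖ ^ 2) x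
      = (Iic R).indicator (fun r => r ^ 2) ‖x‖ := fun x => by
    by_cases hx : ‖x‖ ≤ R <;> simp [hx]
  have hradial : ∫ r in Ioi (0 : ℝ), r ^ (finrank ℝ E - 1) • (Iic R).indicator (fun r => r ^ 2) r
      = R ^ (finrank ℝ E + 2) / (finrank ℝ E + 2) := by
    have hpow : ∀ r : ℝ, r ^ (finrank ℝ E - 1) • (Iic R).indicator (fun r => r ^ 2) r
        = (Iic R).indicator (fun r => r ^ (finrank ℝ E + 1)) r := fun r => by
      by_cases hr : r ≤ R
      · simp only [hr, indicator_of_mem, mem_Iic, smul_eq_mul, ← pow_add]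
        congr 1
        omega
      · simp [hr]
    simp_rw [hpow]
    rw [setIntegral_indicator measurableSet_Iic, Ioi_inter_Iic,
      ← intervalIntegral.integral_of_le hR, integral_pow]
    push_cast
    ring
  rw [← integral_indicator measurableSet_closedBall, funext hball, integral_fun_norm_addHaar,
    hradial, Measure.addHaar_real_closedBall μ _ hR, nsmul_eq_mul, smul_eq_mul, pow_add]
  field_simp

section SecondMoment

variable {X E : Type*} [MeasurableSpace X] [NormedAddCommGroup E] [NormedSpace ℝ E]
  [FiniteDimensional ℝ E] [Nontrivial E] [MeasurableSpace E] [BorelSpace E]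
  {μ : Measure X} {T : X → E} [(μ.map T).IsAddHaarMeasure] {F : X → ℝ} {M : ℝ}

theorem mul_sq_le_integral_norm_sq_mul (hT : Measurable T) (hF0 : ∀ x, 0 ≤ F x)
    (hFM : ∀ x, F x ≤ M) (hF : Integrable F μ) (hF1 : ∫ x, F x ∂μ = 1)
    (hTF : Integrable (fun x => ‖T x‖ ^ 2 * F x) μ) {R : ℝ} (hR : 0 ≤ R)
    (hMR : M * (μ.map T).real (closedBall 0 R) = 1) :
    finrank ℝ E / (finrank ℝ E + 2) * R ^ 2 ≤ ∫ x, ‖T x‖ ^ 2 * F x ∂μ := by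
  have hpre : (μ.map T).real (closedBall 0 R) = μ.real (T ⁻¹' closedBall 0 R) := by
    rw [measureReal_def, Measure.map_apply hT measurableSet_closedBall, measureReal_def]
  have hball := mul_setIntegral_le_integral_mul_of_sublevel (t := R ^ 2)
    (hT measurableSet_closedBall) (hpre ▸ hMR) hF0 hFM hF hF1 (fun x => sq_nonneg ‖T x‖)
    (hT.norm.pow_const 2).aestronglyMeasurable hTF
    (fun x hx => pow_le_pow_left₀ (norm_nonneg _) (mem_closedBall_zero_iff.mp hx) 2)
    (fun x hx => pow_le_pow_left₀ hR (not_le.mp (mt mem_closedBall_zero_iff.mpr hx)).le 2)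
  rw [← setIntegral_map (f := fun z => ‖z‖ ^ 2) measurableSet_closedBall (by fun_prop)
    hT.aemeasurable, setIntegral_closedBall_norm_sq _ hR] at hball
  calc finrank ℝ E / (finrank ℝ E + 2) * R ^ 2
      = M * (finrank ℝ E / (finrank ℝ E + 2) * R ^ 2 * (μ.map T).real (closedBall 0 R)) := by
        rw [mul_comm _ ((μ.map T).real _), ← mul_assoc, hMR, one_mul]
    _ ≤ _ := hball

theorem one_le_mul_measureReal_ball_mul_rpow (hT : Measurable T) (hM : 0 < M)
    (hF0 : ∀ x, 0 ≤ F x) (hFM : ∀ x, F x ≤ M) (hF : Integrable F μ) (hF1 : ∫ x, F x ∂μ = 1)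
    (hTF : Integrable (fun x => ‖T x‖ ^ 2 * F x) μ) :
    1 ≤ M * (μ.map T).real (ball 0 1)
      * ((finrank ℝ E + 2) / finrank ℝ E * ∫ x, ‖T x‖ ^ 2 * F x ∂μ) ^ (finrank ℝ E / 2 : ℝ) := by
  set n := finrank ℝ E
  set V := (μ.map T).real (ball 0 1) with hV_def
  have hn : (0 : ℝ) < n := Nat.cast_pos.mpr finrank_pos
  have hV : 0 < V := ENNReal.toReal_pos (measure_ball_pos _ _ one_pos).ne' measure_ball_lt_top.ne
  set R := ((M * V)⁻¹) ^ (n⁻¹ : ℝ)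
  have hR : 0 ≤ R := by positivity
  have hRn : R ^ n = (M * V)⁻¹ := Real.rpow_inv_natCast_pow (by positivity) finrank_pos.ne'
  have hMR : M * (μ.map T).real (closedBall 0 R) = 1 := by
    rw [Measure.addHaar_real_closedBall _ _ hR, hRn, ← hV_def]
    field_simp
  have hR2 : R ^ 2 ≤ (n + 2) / n * ∫ x, ‖T x‖ ^ 2 * F x ∂μ := by
    have := mul_sq_le_integral_norm_sq_mul hT hF0 hFM hF hF1 hTF hR hMR
    rw [div_mul_eq_mul_div, div_le_iff₀ (by positivity)] at this
    rw [div_mul_eq_mul_div, le_div_iff₀ hn]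
    linarith
  calc (1 : ℝ) = M * V * (R ^ 2) ^ (n / 2 : ℝ) := by
        rw [← Real.rpow_natCast_mul hR, show ((2 : ℕ) : ℝ) * (n / 2) = n by ring,
          Real.rpow_natCast, hRn, mul_inv_cancel₀ (by positivity)]
    _ ≤ _ := by gcongr

end SecondMoment

theorem addHaar_setOf_dotProduct_sub_eq_zero {ι : Type*} [Fintype ι]
    (ν : Measure (ι → ℝ)) [ν.IsAddHaarMeasure] {v : ι → ℝ} (hv : v ≠ 0) (c : ι → ℝ) :
    ν {x | v ⬝ᵥ (x - c) = 0} = 0 := by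
  have hker : LinearMap.ker (dotProductBilin ℝ ℝ v) ≠ ⊤ := fun h => hv <|
    dotProduct_self_eq_zero.mp (LinearMap.mem_ker.mp (h ▸ Submodule.mem_top : v ∈ _))
  have hpre : {x | v ⬝ᵥ (x - c) = 0}
      = (fun x => x + -c) ⁻¹' (LinearMap.ker (dotProductBilin ℝ ℝ v) : Set (ι → ℝ)) := by
    ext x; simp [sub_eq_add_neg]
  rw [hpre, measure_preimage_add_right, Measure.addHaar_submodule ν _ hker]

section Covariance

variable {ι : Type*} [Fintype ι] {f : (ι → ℝ) → ℝ} {μ : ι → ℝ} {S : Matrix ι ι ℝ}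

theorem dotProduct_mulVec_sub_mul_eq_sum (C : Matrix ι ι ℝ) (x : ι → ℝ) :
    (x - μ) ⬝ᵥ C *ᵥ (x - μ) * f x = ∑ i, ∑ j, C i j * (f x * (x i - μ i) * (x j - μ j)) := by
  simp only [dotProduct, mulVec, Finset.mul_sum, Finset.sum_mul, Pi.sub_apply]
  refine Finset.sum_congr rfl fun i _ => Finset.sum_congr rfl fun j _ => ?_
  ring

theorem integrable_dotProduct_mulVec_sub_mul
    (hcov : ∀ i j, Integrable (fun x => f x * (x i - μ i) * (x j - μ j))) (C : Matrix ι ι ℝ) :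
    Integrable (fun x => (x - μ) ⬝ᵥ C *ᵥ (x - μ) * f x) := by
  simp_rw [dotProduct_mulVec_sub_mul_eq_sum]
  exact integrable_finsetSum _ fun i _ => integrable_finsetSum _ fun j _ =>
    (hcov i j).const_mul _

theorem integral_dotProduct_mulVec_sub_mul
    (hcov : ∀ i j, Integrable (fun x => f x * (x i - μ i) * (x j - μ j)))
    (hS : ∀ i j, S i j = ∫ x, f x * (x i - μ i) * (x j - μ j)) (C : Matrix ι ι ℝ) :
    ∫ x, (x - μ) ⬝ᵥ C *ᵥ (x - μ) * f x = trace (Cᵀ * S) := by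
  simp_rw [dotProduct_mulVec_sub_mul_eq_sum]
  rw [integral_finsetSum]
  · simp only [trace, diag_apply, mul_apply, transpose_apply, hS]
    rw [Finset.sum_comm]
    refine Finset.sum_congr rfl fun i _ => ?_
    rw [integral_finsetSum]
    · exact Finset.sum_congr rfl fun j _ => integral_const_mul _ _
    · exact fun j _ => (hcov i j).const_mul _
  · exact fun i _ => integrable_finsetSum _ fun j _ => (hcov i j).const_mul _

theorem posDef_of_density_covariance (hf0 : ∀ x, 0 ≤ f x) (hf1 : ∫ x, f x = 1)
    (hcov : ∀ i j, Integrable (fun x => f x * (x i - μ i) * (x j - μ j)))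
    (hS : ∀ i j, S i j = ∫ x, f x * (x i - μ i) * (x j - μ j)) : S.PosDef := by
  have hsymm : S.IsHermitian := ext fun i j => by
    simp only [conjTranspose_apply, star_trivial, hS]
    congr 1; ext x; ring
  refine PosDef.of_dotProduct_mulVec_pos hsymm fun v hv => ?_
  have hsq : ∀ x, (x - μ) ⬝ᵥ vecMulVec v v *ᵥ (x - μ) * f x = (v ⬝ᵥ (x - μ)) ^ 2 * f x := by
    intro x
    rw [vecMulVec_mulVec, dotProduct_smul, op_smul_eq_mul, dotProduct_comm, sq]
  have hquad : star v ⬝ᵥ S *ᵥ v = ∫ x, (v ⬝ᵥ (x - μ)) ^ 2 * f x := by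
    rw [← funext hsq, integral_dotProduct_mulVec_sub_mul hcov hS]
    simp only [star_trivial, dotProduct, mulVec, trace, diag_apply, mul_apply, transpose_apply,
      vecMulVec_apply, Finset.mul_sum]
    rw [Finset.sum_comm]
    exact Finset.sum_congr rfl fun i _ => Finset.sum_congr rfl fun j _ => by ring
  have hnonneg : ∀ x, 0 ≤ (v ⬝ᵥ (x - μ)) ^ 2 * f x := fun x => mul_nonneg (sq_nonneg _) (hf0 x)
  rw [hquad]
  refine (integral_nonneg hnonneg).lt_of_ne fun h0 => ?_
  have hzero := (integral_eq_zero_iff_of_nonneg hnonneg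
    (funext hsq ▸ integrable_dotProduct_mulVec_sub_mul hcov _)).mp h0.symm
  have hoff : ∀ᵐ x, x ∉ {x | v ⬝ᵥ (x - μ) = 0} :=
    measure_eq_zero_iff_ae_notMem.mp (addHaar_setOf_dotProduct_sub_eq_zero volume hv μ)
  have hf_ae : f =ᵐ[volume] 0 := by
    filter_upwards [hzero, hoff] with x hx hxH
    exact (mul_eq_zero.mp hx).resolve_left (pow_ne_zero 2 hxH)
  simp [integral_congr_ae hf_ae] at hf1

end Covariance

theorem map_toLp_mulVec_sub_volume {ι : Type*} [Fintype ι] [DecidableEq ι] {B : Matrix ι ι ℝ}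
    (hB : B.det ≠ 0) (c : ι → ℝ) :
    (volume : Measure (ι → ℝ)).map (fun x => WithLp.toLp 2 (B *ᵥ (x - c)))
      = ENNReal.ofReal |B.det⁻¹| • volume := by
  have hlin : (volume : Measure (ι → ℝ)).map (toLin' B) = ENNReal.ofReal |B.det⁻¹| • volume := by
    rw [Measure.map_linearMap_addHaar_eq_smul_addHaar _ (by rwa [LinearMap.det_toLin']),
      LinearMap.det_toLin']
  have hcomp : (fun x => WithLp.toLp 2 (B *ᵥ (x - c)))
      = WithLp.toLp 2 ∘ toLin' B ∘ fun x => x - c := rfl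
  rw [hcomp, ← Measure.map_map (by fun_prop) (by fun_prop),
    ← Measure.map_map (by fun_prop) (by fun_prop), (measurePreserving_sub_right _ c).map_eq,
    hlin, Measure.map_smul, (PiLp.volume_preserving_toLp ι).map_eq]

theorem isAddHaarMeasure_map_toLp_mulVec_sub {ι : Type*} [Fintype ι] [DecidableEq ι]
    {B : Matrix ι ι ℝ} (hB : B.det ≠ 0) (c : ι → ℝ) :
    ((volume : Measure (ι → ℝ)).map fun x => WithLp.toLp 2 (B *ᵥ (x - c))).IsAddHaarMeasure := by
  rw [map_toLp_mulVec_sub_volume hB c]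
  exact .smul _ (by simpa using hB) ENNReal.ofReal_ne_top

theorem measureReal_map_toLp_mulVec_sub_ball {ι : Type*} [Fintype ι] [Nonempty ι] [DecidableEq ι]
    {B : Matrix ι ι ℝ} (hB : B.det ≠ 0) (c : ι → ℝ) :
    ((volume : Measure (ι → ℝ)).map fun x => WithLp.toLp 2 (B *ᵥ (x - c))).real (ball 0 1)
      = |B.det|⁻¹ * (√π ^ Fintype.card ι / Gamma (Fintype.card ι / 2 + 1)) := by
  have hΓ : 0 < Gamma (Fintype.card ι / 2 + 1) := Gamma_pos_of_pos (by positivity)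
  rw [map_toLp_mulVec_sub_volume hB c, measureReal_ennreal_smul_apply, measureReal_def,
    EuclideanSpace.volume_ball, abs_inv]
  simp [div_nonneg (pow_nonneg (sqrt_nonneg π) _) hΓ.le]

theorem norm_toLp_mulVec_sq {ι : Type*} [Fintype ι] (B : Matrix ι ι ℝ) (w : ι → ℝ) :
    ‖WithLp.toLp 2 (B *ᵥ w)‖ ^ 2 = w ⬝ᵥ (Bᵀ * B) *ᵥ w := by
  rw [EuclideanSpace.real_norm_sq_eq, ← mulVec_mulVec, dotProduct_mulVec, vecMul_transpose]
  simp [dotProduct, sq]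

open scoped MatrixOrder in
theorem Matrix.PosDef.exists_transpose_mul_self_eq_inv {ι : Type*} [Fintype ι] [DecidableEq ι]
    {S : Matrix ι ι ℝ} (hS : S.PosDef) : ∃ B : Matrix ι ι ℝ, Bᵀ * B = S⁻¹ ∧ |B.det|⁻¹ = √S.det := by
  obtain ⟨B, hB⟩ := CStarAlgebra.nonneg_iff_eq_star_mul_self.mp hS.inv.posSemidef.nonneg
  rw [star_eq_conjTranspose, conjTranspose_eq_transpose_of_trivial] at hB
  refine ⟨B, hB.symm, ?_⟩
  have hdet : B.det ^ 2 = S.det⁻¹ := by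
    rw [← Ring.inverse_eq_inv, ← det_nonsing_inv, hB, det_mul, det_transpose, sq]
  rw [← inv_inv S.det, ← hdet, Real.sqrt_inv, Real.sqrt_sq_eq_abs]

theorem stmt_4_general (d : ℕ) (hd : 0 < d) (f : (Fin d → ℝ) → ℝ) (M : ℝ) (hM : 0 < M)
    (hf_nonneg : ∀ x, 0 ≤ f x) (hf_le : ∀ x, f x ≤ M)
    (hf_int : Integrable f) (hf_prob : ∫ x, f x = 1)
    (μ : Fin d → ℝ)
    (S : Matrix (Fin d) (Fin d) ℝ)
    (hcov_int : ∀ i j, Integrable (fun x : Fin d → ℝ => f x * (x i - μ i) * (x j - μ j)))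
    (hS : ∀ i j, S i j = ∫ x, f x * (x i - μ i) * (x j - μ j)) :
    Real.sqrt S.det ≥ Real.Gamma ((d : ℝ) / 2 + 1) / (M * (π * ((d : ℝ) + 2)) ^ ((d : ℝ) / 2)) := by
  have : NeZero d := ⟨hd.ne'⟩
  have hS_pd : S.PosDef := posDef_of_density_covariance hf_nonneg hf_prob hcov_int hS
  obtain ⟨B, hB, hdetB⟩ := hS_pd.exists_transpose_mul_self_eq_inv
  have hB0 : B.det ≠ 0 := abs_pos.mp (inv_pos.mp (hdetB ▸ sqrt_pos.mpr hS_pd.det_pos))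
  set T := fun x => WithLp.toLp 2 (B *ᵥ (x - μ))
  have := isAddHaarMeasure_map_toLp_mulVec_sub hB0 μ
  have hq : ∀ x, ‖T x‖ ^ 2 * f x = (x - μ) ⬝ᵥ (Bᵀ * B) *ᵥ (x - μ) * f x := fun x => by
    rw [norm_toLp_mulVec_sq]
  have hm : ∫ x, ‖T x‖ ^ 2 * f x = d := by
    rw [funext hq, integral_dotProduct_mulVec_sub_mul hcov_int hS, transpose_mul,
      transpose_transpose, hB, nonsing_inv_mul _ hS_pd.det_pos.ne'.isUnit, trace_one,
      Fintype.card_fin]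
  have hV := measureReal_map_toLp_mulVec_sub_ball hB0 μ
  rw [hdetB, Fintype.card_fin] at hV
  have key := one_le_mul_measureReal_ball_mul_rpow (by fun_prop) hM hf_nonneg hf_le hf_int
    hf_prob (funext hq ▸ integrable_dotProduct_mulVec_sub_mul hcov_int _)
  rw [finrank_euclideanSpace_fin, hm, hV, div_mul_cancel₀ _ (by positivity)] at key
  have hpi : (π * (d + 2)) ^ (d / 2 : ℝ) = √π ^ d * (d + 2) ^ (d / 2 : ℝ) := by
    rw [mul_rpow pi_pos.le (by positivity), sqrt_eq_rpow, ← rpow_natCast, ← rpow_mul pi_pos.le]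
    ring_nf
  have hΓ : 0 < Gamma (d / 2 + 1) := Gamma_pos_of_pos (by positivity)
  rw [ge_iff_le, div_le_iff₀ (by positivity), hpi]
  calc Gamma (d / 2 + 1) ≤ Gamma (d / 2 + 1)
        * (M * (√S.det * (√π ^ d / Gamma (d / 2 + 1))) * (d + 2) ^ (d / 2 : ℝ)) :=
      le_mul_of_one_le_right hΓ.le key
    _ = _ := by field_simp

theorem stmt_4 (d : ℕ) (hd : 0 < d) (f : (Fin d → ℝ) → ℝ) (M : ℝ) (hM : 0 < M)
    (hf_meas : Measurable f) (hf_nonneg : ∀ x, 0 ≤ f x) (hf_le : ∀ x, f x ≤ M)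
    (hf_int : Integrable f) (hf_prob : ∫ x, f x = 1)
    (μ : Fin d → ℝ)
    (hmean_int : ∀ i, Integrable (fun x : Fin d → ℝ => x i * f x))
    (hμ : ∀ i, μ i = ∫ x, x i * f x)
    (S : Matrix (Fin d) (Fin d) ℝ)
    (hcov_int : ∀ i j, Integrable (fun x : Fin d → ℝ => f x * (x i - μ i) * (x j - μ j)))
    (hS : ∀ i j, S i j = ∫ x, f x * (x i - μ i) * (x j - μ j)) :
    Real.sqrt S.det ≥ Real.Gamma ((d : ℝ) / 2 + 1) / (M * (π * ((d : ℝ) + 2)) ^ ((d : ℝ) / 2)) :=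
  stmt_4_general d hd f M hM hf_nonneg hf_le hf_int hf_prob μ S hcov_int hS
end

section
/- Let $f$ be a probability density on $\mathbb{R}$ with finite second moments bounded above by $M > 0$. Then its standard deviation satisfies $\sigma_f \ge \frac{1}{M\sqrt{12}}$, with equality if and only if $f$ equals a uniform density on an interval of length $1/M$ almost everywhere. -/
open MeasureTheory Real Set

/-! With `c = 1 / (2 M)`, let `g` be the density of height `M` on `(m - c, m + c)`, which has the
same mass as `f`. Since `0 ≤ f ≤ M`, the product `(f - g) ((x - m)² - c²)` is pointwise
nonnegative, and its integral is `∫ (x - m)² f - 1 / (12 M²)`. Hence every second moment of `f`,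
in particular its variance, is at least `1 / (12 M²)`, with equality iff `f = g` almost
everywhere. When `f` is uniform on an interval of length `1 / M`, its mean is the midpoint. -/

lemma indicator_Ioo_const_mul_eq (M u v : ℝ) (p : ℝ → ℝ) :
    (fun x => (Ioo u v).indicator (fun _ => M) x * p x) = (Ioo u v).indicator fun x => M * p x := by
  ext x
  by_cases hx : x ∈ Ioo u v <;> simp [hx]

lemma integral_indicator_Ioo_const_mul (M : ℝ) {u v : ℝ} (huv : u ≤ v) (p : ℝ → ℝ) :
    ∫ x, (Ioo u v).indicator (fun _ => M) x * p x = M * ∫ x in u..v, p x := by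
  rw [indicator_Ioo_const_mul_eq, integral_indicator measurableSet_Ioo,
    ← integral_Ioc_eq_integral_Ioo, ← intervalIntegral.integral_of_le huv,
    intervalIntegral.integral_const_mul]

lemma integrable_indicator_Ioo_const_mul (M u v : ℝ) {p : ℝ → ℝ} (hp : Continuous p) :
    Integrable fun x => (Ioo u v).indicator (fun _ => M) x * p x := by
  rw [indicator_Ioo_const_mul_eq, integrable_indicator_iff measurableSet_Ioo]
  exact ((continuous_const.mul hp).integrableOn_Icc).mono_set Ioo_subset_Icc_self

lemma ae_sq_sub_sq_ne_zero (m c : ℝ) : ∀ᵐ x : ℝ, (x - m) ^ 2 - c ^ 2 ≠ 0 := by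
  have hfin : ({m - c, m + c} : Set ℝ).Countable := (toFinite _).countable
  filter_upwards [hfin.ae_notMem volume] with x hx h
  simp only [mem_insert_iff, mem_singleton_iff, not_or] at hx
  have : (x - (m - c)) * (x - (m + c)) = 0 := by linear_combination h
  rcases mul_eq_zero.mp this with h | h
  exacts [hx.1 (by linarith), hx.2 (by linarith)]

lemma integrable_sq_sub_mul {f : ℝ → ℝ} (hf : Integrable f) (hf1 : Integrable fun x => x * f x)
    (hf2 : Integrable fun x => x ^ 2 * f x) (m : ℝ) :
    Integrable fun x => (x - m) ^ 2 * f x := by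
  have h := (hf2.sub (hf1.const_mul (2 * m))).add (hf.const_mul (m ^ 2))
  refine h.congr (.of_forall fun x => ?_)
  simp only [Pi.add_apply, Pi.sub_apply]
  ring

lemma one_div_mul_sqrt_twelve {M : ℝ} (hM : 0 < M) :
    1 / (M * √12) = √(1 / (12 * M ^ 2)) := by
  rw [eq_comm, Real.sqrt_eq_iff_mul_self_eq (by positivity) (by positivity)]
  field_simp
  rw [Real.sq_sqrt (by norm_num)]

noncomputable def centeredUniform (M m : ℝ) : ℝ → ℝ :=
  (Ioo (m - 1 / (2 * M)) (m + 1 / (2 * M))).indicator fun _ => M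

section CenteredUniform

variable {f : ℝ → ℝ} {M : ℝ} (m : ℝ)

lemma sub_centeredUniform_mul_nonneg (hf0 : ∀ x, 0 ≤ f x) (hfM : ∀ x, f x ≤ M) (x : ℝ) :
    0 ≤ (f x - centeredUniform M m x) * ((x - m) ^ 2 - (1 / (2 * M)) ^ 2) := by
  set c := 1 / (2 * M)
  have hc : 0 ≤ c := by have := (hf0 x).trans (hfM x); positivity
  by_cases hx : x ∈ Ioo (m - c) (m + c)
  · rw [centeredUniform, indicator_of_mem hx]
    have : (x - m) ^ 2 ≤ c ^ 2 := by nlinarith [hx.1, hx.2]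
    exact mul_nonneg_of_nonpos_of_nonpos (by linarith [hfM x]) (by linarith)
  · rw [centeredUniform, indicator_of_notMem hx, sub_zero]
    have : c ^ 2 ≤ (x - m) ^ 2 := by
      rcases not_and_or.mp hx with h | h <;> push Not at h <;> nlinarith
    exact mul_nonneg (hf0 x) (by linarith)

lemma integrable_sub_centeredUniform_mul (hf : Integrable f)
    (hf2 : Integrable fun x => (x - m) ^ 2 * f x) :
    Integrable fun x => (f x - centeredUniform M m x) * ((x - m) ^ 2 - (1 / (2 * M)) ^ 2) := by
  have hg := integrable_indicator_Ioo_const_mul M (m - 1 / (2 * M)) (m + 1 / (2 * M))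
    (p := fun x => (x - m) ^ 2 - (1 / (2 * M)) ^ 2) (by fun_prop)
  refine ((hf2.sub (hf.const_mul ((1 / (2 * M)) ^ 2))).sub hg).congr (.of_forall fun x => ?_)
  simp only [Pi.sub_apply, centeredUniform]
  ring

lemma integral_sub_centeredUniform_mul (hM : 0 < M) (hf : Integrable f) (hf1 : ∫ x, f x = 1)
    (hf2 : Integrable fun x => (x - m) ^ 2 * f x) :
    ∫ x, (f x - centeredUniform M m x) * ((x - m) ^ 2 - (1 / (2 * M)) ^ 2)
      = (∫ x, (x - m) ^ 2 * f x) - 1 / (12 * M ^ 2) := by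
  set c := 1 / (2 * M)
  have hA : Integrable fun x => (x - m) ^ 2 * f x - c ^ 2 * f x := hf2.sub (hf.const_mul _)
  have hg := integrable_indicator_Ioo_const_mul M (m - c) (m + c)
    (p := fun x => (x - m) ^ 2 - c ^ 2) (by fun_prop)
  have hbox : ∫ x in (m - c)..(m + c), ((x - m) ^ 2 - c ^ 2) = -(4 * c ^ 3) / 3 := by
    have hsq : Continuous fun x : ℝ => (x - m) ^ 2 := by fun_prop
    rw [intervalIntegral.integral_sub (hsq.intervalIntegrable _ _) intervalIntegrable_const,
      intervalIntegral.integral_comp_sub_right (fun y => y ^ 2) m, integral_pow,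
      intervalIntegral.integral_const, smul_eq_mul]
    ring
  calc ∫ x, (f x - centeredUniform M m x) * ((x - m) ^ 2 - c ^ 2)
      = (∫ x, ((x - m) ^ 2 * f x - c ^ 2 * f x))
          - ∫ x, (Ioo (m - c) (m + c)).indicator (fun _ => M) x * ((x - m) ^ 2 - c ^ 2) := by
        rw [← integral_sub hA hg]
        congr 1 with x
        simp only [centeredUniform, c]
        ring
    _ = (∫ x, (x - m) ^ 2 * f x) - 1 / (12 * M ^ 2) := by
        rw [integral_sub hf2 (hf.const_mul _), integral_const_mul, hf1,
          integral_indicator_Ioo_const_mul M (by linarith [show 0 < c by positivity]), hbox]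
        simp only [c]
        field_simp
        ring

theorem le_integral_sq_sub_mul (hM : 0 < M) (hf0 : ∀ x, 0 ≤ f x) (hfM : ∀ x, f x ≤ M)
    (hf : Integrable f) (hf1 : ∫ x, f x = 1) (hf2 : Integrable fun x => (x - m) ^ 2 * f x) :
    1 / (12 * M ^ 2) ≤ ∫ x, (x - m) ^ 2 * f x := by
  have h : 0 ≤ ∫ x, (f x - centeredUniform M m x) * ((x - m) ^ 2 - (1 / (2 * M)) ^ 2) :=
    integral_nonneg fun x => sub_centeredUniform_mul_nonneg m hf0 hfM x
  rw [integral_sub_centeredUniform_mul m hM hf hf1 hf2] at h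
  linarith

theorem integral_sq_sub_mul_eq_iff (hM : 0 < M) (hf0 : ∀ x, 0 ≤ f x) (hfM : ∀ x, f x ≤ M)
    (hf : Integrable f) (hf1 : ∫ x, f x = 1) (hf2 : Integrable fun x => (x - m) ^ 2 * f x) :
    ∫ x, (x - m) ^ 2 * f x = 1 / (12 * M ^ 2) ↔ f =ᵐ[volume] centeredUniform M m := by
  rw [← sub_eq_zero, ← integral_sub_centeredUniform_mul m hM hf hf1 hf2,
    integral_eq_zero_iff_of_nonneg (fun x => sub_centeredUniform_mul_nonneg m hf0 hfM x)
      (integrable_sub_centeredUniform_mul m hf hf2)]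
  constructor
  · intro h
    filter_upwards [h, ae_sq_sub_sq_ne_zero m (1 / (2 * M))] with x hx hne
    exact sub_eq_zero.mp ((mul_eq_zero.mp hx).resolve_right hne)
  · intro h
    filter_upwards [h] with x hx
    simp [hx]

end CenteredUniform

lemma integral_mul_eq_of_ae_eq_indicator {f : ℝ → ℝ} {M : ℝ} (hM : 0 < M) {a : ℝ}
    (hf : f =ᵐ[volume] (Ioo a (a + 1 / M)).indicator fun _ => M) :
    ∫ x, x * f x = a + 1 / (2 * M) := by
  calc ∫ x, x * f x = ∫ x, (Ioo a (a + 1 / M)).indicator (fun _ => M) x * x := by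
        refine integral_congr_ae ?_
        filter_upwards [hf] with x hx
        rw [hx, mul_comm]
    _ = a + 1 / (2 * M) := by
        rw [integral_indicator_Ioo_const_mul M (by simp [hM.le]), integral_id]
        field_simp
        ring

theorem stmt_5_general (f : ℝ → ℝ) (M : ℝ) (hM : 0 < M)
    (hf_nonneg : ∀ x, 0 ≤ f x) (hf_le : ∀ x, f x ≤ M)
    (hf_int : Integrable f) (hf_prob : ∫ x, f x = 1)
    (hmom1 : Integrable (fun x => x * f x)) (hmom2 : Integrable (fun x => x ^ 2 * f x))
    (μf σf : ℝ) (hμ : μf = ∫ x, x * f x)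
    (hσ : σf = Real.sqrt (∫ x, (x - μf) ^ 2 * f x)) :
    σf ≥ 1 / (M * Real.sqrt 12) ∧
      (σf = 1 / (M * Real.sqrt 12) ↔
        ∃ a : ℝ, f =ᵐ[volume] (Ioo a (a + 1 / M)).indicator fun _ => M) := by
  have hf2 := integrable_sq_sub_mul hf_int hmom1 hmom2 μf
  rw [hσ, one_div_mul_sqrt_twelve hM]
  refine ⟨Real.sqrt_le_sqrt (le_integral_sq_sub_mul μf hM hf_nonneg hf_le hf_int hf_prob hf2), ?_⟩
  rw [Real.sqrt_inj (integral_nonneg fun x => mul_nonneg (sq_nonneg _) (hf_nonneg x))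
    (by positivity), integral_sq_sub_mul_eq_iff μf hM hf_nonneg hf_le hf_int hf_prob hf2]
  have hwidth : μf - 1 / (2 * M) + 1 / M = μf + 1 / (2 * M) := by field_simp; ring
  constructor
  · exact fun h => ⟨μf - 1 / (2 * M), by rwa [hwidth]⟩
  · rintro ⟨a, ha⟩
    have hmid : μf - 1 / (2 * M) = a := by
      rw [hμ, integral_mul_eq_of_ae_eq_indicator hM ha]
      ring
    rwa [centeredUniform, ← hwidth, hmid]

theorem stmt_5 (f : ℝ → ℝ) (M : ℝ) (hM : 0 < M)
    (hf_meas : Measurable f) (hf_nonneg : ∀ x, 0 ≤ f x) (hf_le : ∀ x, f x ≤ M)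
    (hf_int : Integrable f) (hf_prob : ∫ x, f x = 1)
    (hmom1 : Integrable (fun x => x * f x)) (hmom2 : Integrable (fun x => x ^ 2 * f x))
    (μf σf : ℝ) (hμ : μf = ∫ x, x * f x)
    (hσ : σf = Real.sqrt (∫ x, (x - μf) ^ 2 * f x)) :
    σf ≥ 1 / (M * Real.sqrt 12) ∧
      (σf = 1 / (M * Real.sqrt 12) ↔
        ∃ a : ℝ, f =ᵐ[volume] (Ioo a (a + 1 / M)).indicator fun _ => M) :=
  stmt_5_general f M hM hf_nonneg hf_le hf_int hf_prob hmom1 hmom2 μf σf hμ hσ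
end

section
/- Every uniform density $u$ on a ball in $\mathbb{R}^d$ is $\mathcal{M}$-undecomposable: for any representation $u = \alpha_1 v_1 + \cdots + \alpha_m v_m$ as a mixture of probability densities with positive weights summing to 1, one has $|\Sigma_{v_1}|^{1/2} + \cdots + |\Sigma_{v_m}|^{1/2} \ge |\Sigma_u|^{1/2}$. -/
/-!
Let `f ≤ M` be a probability density on `ℝ^d` with second-moment matrix `S` about `m`, and let
`M |B_ρ| = 1`. With `c = (det S)^{1/d}`, the quadratic form of `c S⁻¹` has determinant one, so
a volume-preserving affine change of variables turns it into `‖y‖²`, and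
`∫ f(x) (x - m)ᵀ c S⁻¹ (x - m) dx = tr (c S⁻¹ S) = d c`. By the bathtub principle, among
densities bounded by `M` this second moment is smallest for `M · 1_{B_ρ}`, where it equals
`d ρ² / (d + 2)`. Hence `det S ≥ (ρ² / (d + 2))^d`.

A component of `u = ∑ αⱼ vⱼ` satisfies `αⱼ vⱼ ≤ u ≤ |B_r|⁻¹`, so `ρⱼ^d = αⱼ r^d` and
`√(det Σ_{vⱼ}) ≥ αⱼ (r² / (d + 2))^{d/2}`; summing over `j` gives `(r² / (d + 2))^{d/2}`. For `u`
itself `tr Σ_u = d r² / (d + 2)`, and AM-GM on the eigenvalues bounds `√(det Σ_u)` by the same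
quantity.
-/

open MeasureTheory Finset Matrix Metric
open scoped MatrixOrder

theorem MeasureTheory.MeasurePreserving.integral_comp_of_aestronglyMeasurable {α β G : Type*}
    [MeasurableSpace α] [MeasurableSpace β] [NormedAddCommGroup G] [NormedSpace ℝ G]
    {μ : Measure α} {ν : Measure β} {φ : α → β} (hφ : MeasurePreserving φ μ ν) {F : β → G}
    (hF : AEStronglyMeasurable F ν) :
    ∫ x, F (φ x) ∂μ = ∫ y, F y ∂ν := by
  rw [← integral_map hφ.measurable.aemeasurable (hφ.map_eq.symm ▸ hF), hφ.map_eq]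

theorem mul_setIntegral_le_integral_mul_of_bathtub {X : Type*} [MeasurableSpace X]
    {ν : Measure X} {f g : X → ℝ} {s : Set X} {M t : ℝ}
    (hs : MeasurableSet s) (hνs : ν s ≠ ⊤) (hf0 : ∀ x, 0 ≤ f x) (hfM : ∀ x, f x ≤ M)
    (hf : Integrable f ν) (hfg : Integrable (fun x => f x * g x) ν) (hg : IntegrableOn g s ν)
    (hg_le : ∀ x ∈ s, g x ≤ t) (hg_ge : ∀ x ∉ s, t ≤ g x) (hM : M * ν.real s = ∫ x, f x ∂ν) :
    M * ∫ x in s, g x ∂ν ≤ ∫ x, f x * g x ∂ν := by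
  -- the right-hand side integrates to `t (∫ f - M ν(s)) = 0`
  have key (x : X) :
      t * (f x - s.indicator (fun _ => M) x) ≤ f x * g x - s.indicator (fun x => M * g x) x := by
    by_cases hx : x ∈ s
    · simp only [Set.indicator_of_mem hx]
      nlinarith [hfM x, hg_le x hx]
    · simp only [Set.indicator_of_notMem hx]
      nlinarith [hf0 x, hg_ge x hx]
  have hMs : Integrable (s.indicator fun _ => M) ν :=
    (integrable_indicator_iff hs).2 (integrableOn_const hνs)
  have hMg : Integrable (s.indicator fun x => M * g x) ν :=
    (integrable_indicator_iff hs).2 (hg.const_mul M)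
  have := integral_mono ((hf.sub hMs).const_mul t) (hfg.sub hMg) key
  rw [integral_const_mul, integral_sub' hf hMs, integral_sub' hfg hMg, integral_indicator hs,
    integral_indicator hs, setIntegral_const, integral_const_mul, smul_eq_mul,
    mul_comm (ν.real s), hM, sub_self, mul_zero] at this
  linarith

theorem indicator_const_mul_eq {X : Type*} (s : Set X) (a : ℝ) (g : X → ℝ) :
    (fun x => s.indicator (fun _ => a) x * g x) = s.indicator fun x => a * g x :=
  funext fun _ => (Set.indicator_mul_left s _ g).symm

section HaarMeasure

variable {E : Type*} [NormedAddCommGroup E] [NormedSpace ℝ E] [FiniteDimensional ℝ E]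
  [MeasurableSpace E] (μ : Measure E) [μ.IsAddHaarMeasure]

theorem measureReal_ball_pos (x : E) {r : ℝ} (hr : 0 < r) : 0 < μ.real (ball x r) :=
  ENNReal.toReal_pos (measure_ball_pos μ x hr).ne' measure_ball_lt_top.ne

variable [BorelSpace E]

theorem LinearMap.measurePreserving_of_det_eq_one {L : E →ₗ[ℝ] E} (hL : LinearMap.det L = 1) :
    MeasurePreserving L μ μ := by
  refine ⟨L.continuous_of_finiteDimensional.measurable, ?_⟩
  rw [Measure.map_linearMap_addHaar_eq_smul_addHaar μ (by simp [hL]), hL]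
  simp

variable [Nontrivial E]

theorem measureReal_ball_eq_pow_mul (x : E) {r : ℝ} (hr : 0 ≤ r) :
    μ.real (ball x r) = r ^ Module.finrank ℝ E * μ.real (ball 0 1) := by
  simp [measureReal_def, Measure.addHaar_ball μ x hr, ENNReal.toReal_ofReal (pow_nonneg hr _)]

theorem integral_norm_sq_ball {ρ : ℝ} (hρ : 0 ≤ ρ) :
    ∫ x in ball 0 ρ, ‖x‖ ^ 2 ∂μ =
      Module.finrank ℝ E / (Module.finrank ℝ E + 2) * ρ ^ 2 * μ.real (ball 0 ρ) := by
  set n := Module.finrank ℝ E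
  have hn : 0 < n := Module.finrank_pos
  have hradial : ∫ y in Set.Ioi (0 : ℝ), y ^ (n - 1) • (Set.Iio ρ).indicator (· ^ 2) y
      = ρ ^ (n + 2) / (n + 2) := by
    have (y : ℝ) (_ : y ∈ Set.Ioi 0) : y ^ (n - 1) • (Set.Iio ρ).indicator (· ^ 2) y
        = (Set.Iio ρ).indicator (· ^ (n + 1)) y := by
      by_cases hy : y < ρ
      · simp only [Set.indicator_of_mem (Set.mem_Iio.2 hy), smul_eq_mul, ← pow_add]
        congr 1
        omega
      · simp [hy]
    rw [setIntegral_congr_fun measurableSet_Ioi this, integral_indicator measurableSet_Iio,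
      Measure.restrict_restrict measurableSet_Iio, Set.Iio_inter_Ioi,
      ← integral_Ioc_eq_integral_Ioo, ← intervalIntegral.integral_of_le hρ, integral_pow]
    push_cast
    ring
  have hball :
      ∫ x in ball (0 : E) ρ, ‖x‖ ^ 2 ∂μ = ∫ x, (Set.Iio ρ).indicator (· ^ 2) ‖x‖ ∂μ := by
    rw [← integral_indicator measurableSet_ball]
    congr 1 with x
    by_cases hx : ‖x‖ < ρ <;> simp [Set.indicator, hx]
  rw [hball, integral_fun_norm_addHaar, hradial, measureReal_ball_eq_pow_mul μ 0 hρ,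
    nsmul_eq_mul, smul_eq_mul]
  field_simp
  ring

theorem integral_norm_sub_sq_ball (c : E) {ρ : ℝ} (hρ : 0 ≤ ρ) :
    ∫ x in ball c ρ, ‖x - c‖ ^ 2 ∂μ =
      Module.finrank ℝ E / (Module.finrank ℝ E + 2) * ρ ^ 2 * μ.real (ball c ρ) := by
  have : ∫ x in ball c ρ, ‖x - c‖ ^ 2 ∂μ =
      ∫ x, (ball (0 : E) ρ).indicator (‖·‖ ^ 2) (x - c) ∂μ := by
    rw [← integral_indicator measurableSet_ball]
    congr 1 with x
    simp only [Set.indicator, mem_ball, dist_eq_norm, sub_zero]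
  rw [this, integral_sub_right_eq_self (fun y => (ball (0 : E) ρ).indicator (‖·‖ ^ 2) y),
    integral_indicator measurableSet_ball, integral_norm_sq_ball μ hρ,
    Measure.addHaar_real_ball_center μ c]

theorem le_integral_mul_norm_sq_of_le_const {h : E → ℝ} {M ρ : ℝ} (hρ : 0 ≤ ρ)
    (h0 : ∀ x, 0 ≤ h x) (hM : ∀ x, h x ≤ M) (hint : Integrable h μ)
    (hint2 : Integrable (fun x => h x * ‖x‖ ^ 2) μ)
    (hMρ : M * μ.real (ball 0 ρ) = ∫ x, h x ∂μ) :
    Module.finrank ℝ E / (Module.finrank ℝ E + 2) * ρ ^ 2 * ∫ x, h x ∂μ ≤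
      ∫ x, h x * ‖x‖ ^ 2 ∂μ := by
  have hball := integral_norm_sub_sq_ball μ (0 : E) hρ
  simp only [sub_zero] at hball
  have hg : IntegrableOn (fun x : E => ‖x‖ ^ 2) (ball 0 ρ) μ :=
    ((continuous_norm.pow 2).continuousOn.integrableOn_compact
      (isCompact_closedBall 0 ρ)).mono_set ball_subset_closedBall
  have := mul_setIntegral_le_integral_mul_of_bathtub (t := ρ ^ 2) measurableSet_ball
    measure_ball_lt_top.ne h0 hM hint hint2 hg
    (fun x hx => pow_le_pow_left₀ (norm_nonneg x) (by simpa using (mem_ball_zero_iff.1 hx).le) 2)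
    (fun x hx => pow_le_pow_left₀ hρ (by simpa using hx) 2) hMρ
  calc _ = M * ∫ x in ball 0 ρ, ‖x‖ ^ 2 ∂μ := by rw [hball, ← hMρ]; ring
    _ ≤ _ := this

end HaarMeasure

theorem addHaar_setOf_inner_sub_eq_zero {E : Type*} [NormedAddCommGroup E]
    [InnerProductSpace ℝ E] [FiniteDimensional ℝ E] [MeasurableSpace E] [BorelSpace E]
    (μ : Measure E) [μ.IsAddHaarMeasure] {a : E} (ha : a ≠ 0) (m : E) :
    μ {x | inner ℝ a (x - m) = 0} = 0 := by
  have hK : (ℝ ∙ a)ᗮ ≠ ⊤ := by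
    simpa [Submodule.orthogonal_eq_top_iff] using ha
  have : {x | inner ℝ a (x - m) = 0} = (· + -m) ⁻¹' ((ℝ ∙ a)ᗮ : Set E) := by
    ext x
    simp [Submodule.mem_orthogonal_singleton_iff_inner_right, sub_eq_add_neg]
  rw [this, measure_preimage_add_right]
  exact Measure.addHaar_submodule μ _ hK

variable {ι : Type*} [Fintype ι]

theorem Matrix.PosSemidef.det_le_trace_div_card_pow [DecidableEq ι] [Nonempty ι]
    {A : Matrix ι ι ℝ} (hA : A.PosSemidef) :
    A.det ≤ (A.trace / Fintype.card ι) ^ Fintype.card ι := by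
  set n := Fintype.card ι
  set ev := hA.isHermitian.eigenvalues
  have hev : ∀ i ∈ univ, 0 ≤ ev i := fun i _ => hA.eigenvalues_nonneg i
  have hn : (n : ℝ) ≠ 0 := by simp [n, Fintype.card_ne_zero]
  have amgm := Real.geom_mean_le_arith_mean_weighted univ (fun _ => (n : ℝ)⁻¹) ev
    (fun _ _ => by positivity) (by simp [n, hn]) hev
  rw [Real.finsetProd_rpow _ _ hev, ← Finset.mul_sum] at amgm
  have hdet : A.det = ∏ i, ev i := by simpa using hA.isHermitian.det_eq_prod_eigenvalues
  have htr : A.trace = ∑ i, ev i := by simpa using hA.isHermitian.trace_eq_sum_eigenvalues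
  calc A.det = ((∏ i, ev i) ^ (n : ℝ)⁻¹) ^ n := by
        rw [Real.rpow_inv_natCast_pow (prod_nonneg hev) (by simpa using hn), hdet]
    _ ≤ (A.trace / n) ^ n := by
        rw [htr, div_eq_inv_mul]
        exact pow_le_pow_left₀ (Real.rpow_nonneg (prod_nonneg hev) _) amgm n

theorem Matrix.PosDef.exists_measurePreserving_quadForm_eq_norm_sq [DecidableEq ι]
    {B : Matrix ι ι ℝ} (hB : B.PosDef) (hdet : B.det = 1) (m : ι → ℝ) :
    ∃ φ : EuclideanSpace ℝ ι → EuclideanSpace ℝ ι, MeasurePreserving φ ∧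
      ∀ y, (⇑(φ y) - m) ⬝ᵥ B *ᵥ (⇑(φ y) - m) = ‖y‖ ^ 2 := by
  set R := CFC.sqrt B
  have hR : R.PosSemidef := (CFC.sqrt_nonneg B).posSemidef
  have hRR : R * R = B := CFC.sqrt_mul_sqrt_self B hB.posSemidef.nonneg
  have hRdet : R.det = 1 := by simp [R, hB.posSemidef.det_sqrt, hdet]
  have hRunit : IsUnit R.det := by simp [hRdet]
  set T := R⁻¹
  have hTT : Tᵀ = T := isHermitian_iff_isSymm.1 hR.isHermitian.inv
  have hTBT : Tᵀ * B * T = 1 := by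
    rw [hTT, ← hRR, show T * (R * R) * T = (T * R) * (R * T) by simp only [Matrix.mul_assoc],
      nonsing_inv_mul R hRunit, mul_nonsing_inv R hRunit, Matrix.one_mul]
  set L := toLpLin 2 2 T
  have hL : LinearMap.det L = 1 := by
    rw [LinearMap.det_toLpLin, det_nonsing_inv, hRdet, Ring.inverse_one]
  refine ⟨fun y => WithLp.toLp 2 m + L y,
    (measurePreserving_add_left volume _).comp (L.measurePreserving_of_det_eq_one volume hL),
    fun y => ?_⟩
  have : ⇑(WithLp.toLp 2 m + L y) - m = T *ᵥ y.ofLp := by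
    ext i
    simp [L, toLpLin_apply]
  rw [this, mulVec_mulVec, dotProduct_mulVec, ← vecMul_transpose, vecMul_vecMul,
    ← Matrix.mul_assoc, hTBT, vecMul_one, ← real_inner_self_eq_norm_sq,
    EuclideanSpace.inner_eq_star_dotProduct, star_trivial]

theorem mul_dotProduct_mulVec_eq_sum (c : ℝ) (v : ι → ℝ) (B : Matrix ι ι ℝ) :
    c * (v ⬝ᵥ B *ᵥ v) = ∑ i, ∑ k, B i k * (c * v i * v k) := by
  simp only [dotProduct, mulVec, mul_sum]
  exact sum_congr rfl fun i _ => sum_congr rfl fun k _ => by ring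

/-- When `f` is a probability density and `m` its mean, `S` is the covariance matrix `Σ_f`. -/
structure HasSecondMoments (f : EuclideanSpace ℝ ι → ℝ) (m : ι → ℝ) (S : Matrix ι ι ℝ) :
    Prop where
  integrable : ∀ i k, Integrable fun x : EuclideanSpace ℝ ι => f x * (x i - m i) * (x k - m k)
  eq_integral : ∀ i k, S i k = ∫ x, f x * (x i - m i) * (x k - m k)

theorem hasSecondMoments_indicator_ball {S : Matrix ι ι ℝ} {c : EuclideanSpace ℝ ι} {r a : ℝ}
    (hS : ∀ i k, S i k = ∫ x, (ball c r).indicator (fun _ => a) x * (x i - c i) * (x k - c k)) :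
    HasSecondMoments ((ball c r).indicator fun _ => a) c S := by
  refine ⟨fun i k => ?_, hS⟩
  simp_rw [mul_assoc]
  rw [indicator_const_mul_eq (g := fun x : EuclideanSpace ℝ ι => (x i - c i) * (x k - c k)),
    integrable_indicator_iff measurableSet_ball]
  exact ((by fun_prop : Continuous fun x : EuclideanSpace ℝ ι => a * ((x i - c i) * (x k - c k)))
    |>.continuousOn.integrableOn_compact (isCompact_closedBall c r)).mono_set
      ball_subset_closedBall

namespace HasSecondMoments

variable {f : EuclideanSpace ℝ ι → ℝ} {m : ι → ℝ} {S : Matrix ι ι ℝ}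

theorem isSymm (h : HasSecondMoments f m S) : S.IsSymm := by
  ext i k
  simp only [transpose_apply, h.eq_integral]
  congr 1 with x
  ring

theorem integrable_mul_quadForm (h : HasSecondMoments f m S) (B : Matrix ι ι ℝ) :
    Integrable fun x : EuclideanSpace ℝ ι => f x * ((⇑x - m) ⬝ᵥ B *ᵥ (⇑x - m)) := by
  simp only [mul_dotProduct_mulVec_eq_sum]
  exact integrable_finsetSum _ fun i _ =>
    integrable_finsetSum _ fun k _ => (h.integrable i k).const_mul _

theorem integral_mul_quadForm (h : HasSecondMoments f m S) (B : Matrix ι ι ℝ) :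
    ∫ x, f x * ((⇑x - m) ⬝ᵥ B *ᵥ (⇑x - m)) = ∑ i, ∑ k, B i k * S i k := by
  simp only [mul_dotProduct_mulVec_eq_sum, Pi.sub_apply]
  rw [integral_finsetSum _ fun i _ =>
    integrable_finsetSum _ fun k _ => (h.integrable i k).const_mul (B i k)]
  refine sum_congr rfl fun i _ => ?_
  rw [integral_finsetSum _ fun k _ => (h.integrable i k).const_mul (B i k)]
  simp only [integral_const_mul, h.eq_integral]

theorem posDef (h : HasSecondMoments f m S) (hf0 : ∀ x, 0 ≤ f x) (hf : ∫ x, f x ≠ 0) :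
    S.PosDef := by
  refine .of_dotProduct_mulVec_pos (isHermitian_iff_isSymm.2 h.isSymm) fun a ha => ?_
  have hQ (v : ι → ℝ) : v ⬝ᵥ vecMulVec a a *ᵥ v = (a ⬝ᵥ v) ^ 2 := by
    rw [vecMulVec_mulVec, op_smul_eq_smul, dotProduct_smul, smul_eq_mul, dotProduct_comm, sq]
  have hquad : star a ⬝ᵥ S *ᵥ a = ∫ x, f x * (a ⬝ᵥ (⇑x - m)) ^ 2 := by
    simp_rw [← hQ, h.integral_mul_quadForm]
    simp only [star_trivial, vecMulVec_apply, dotProduct, mulVec, mul_sum]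
    exact sum_congr rfl fun i _ => sum_congr rfl fun k _ => by ring
  have hnonneg (x : EuclideanSpace ℝ ι) : 0 ≤ f x * (a ⬝ᵥ (⇑x - m)) ^ 2 :=
    mul_nonneg (hf0 x) (sq_nonneg _)
  rw [hquad]
  refine (integral_nonneg hnonneg).lt_of_ne fun h0 => hf ?_
  have hint := h.integrable_mul_quadForm (vecMulVec a a)
  simp_rw [hQ] at hint
  have hzero := (integral_eq_zero_iff_of_nonneg hnonneg hint).1 h0.symm
  have hplane : ∀ᵐ x : EuclideanSpace ℝ ι, a ⬝ᵥ (⇑x - m) ≠ 0 := by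
    have := addHaar_setOf_inner_sub_eq_zero volume (a := WithLp.toLp 2 a) (by simpa using ha)
      (WithLp.toLp 2 m)
    rw [measure_eq_zero_iff_ae_notMem] at this
    filter_upwards [this] with x hx
    simpa [EuclideanSpace.inner_eq_star_dotProduct, dotProduct_comm] using hx
  refine integral_eq_zero_of_ae ?_
  filter_upwards [hzero, hplane] with x hx hxa
  exact (mul_eq_zero.1 hx).resolve_right (pow_ne_zero 2 hxa)

variable [DecidableEq ι]

theorem sum_sum_inv_mul_self (h : HasSecondMoments f m S) (hS : IsUnit S.det) :
    ∑ i, ∑ k, S⁻¹ i k * S i k = Fintype.card ι := by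
  calc ∑ i, ∑ k, S⁻¹ i k * S i k = (S⁻¹ * S).trace := by
        simp only [trace, diag_apply, mul_apply]
        exact sum_congr rfl fun i _ => sum_congr rfl fun k _ => by rw [← h.isSymm.apply i k]
    _ = Fintype.card ι := by rw [nonsing_inv_mul S hS, trace_one]

theorem pow_le_det_of_le_const [Nonempty ι] {M ρ : ℝ} (h : HasSecondMoments f m S)
    (hρ : 0 ≤ ρ) (hf0 : ∀ x, 0 ≤ f x) (hfM : ∀ x, f x ≤ M) (hf : Integrable f)
    (hf1 : ∫ x, f x = 1) (hMρ : M * volume.real (ball (0 : EuclideanSpace ℝ ι) ρ) = 1) :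
    (ρ ^ 2 / (Fintype.card ι + 2)) ^ Fintype.card ι ≤ S.det := by
  set n := Fintype.card ι
  have hn : (0 : ℝ) < n := by simp [n, Fintype.card_pos]
  have hfin : Module.finrank ℝ (EuclideanSpace ℝ ι) = n := finrank_euclideanSpace
  have hS := h.posDef hf0 (by simp [hf1])
  set c := S.det ^ (n : ℝ)⁻¹
  have hc : 0 < c := Real.rpow_pos_of_pos hS.det_pos _
  have hcn : c ^ n = S.det := Real.rpow_inv_natCast_pow hS.det_pos.le Fintype.card_ne_zero
  have hBdet : (c • S⁻¹).det = 1 := by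
    rw [det_smul, det_nonsing_inv, hcn, Ring.inverse_eq_inv', mul_inv_cancel₀ hS.det_pos.ne']
  obtain ⟨φ, hφ, hφQ⟩ :=
    (hS.inv.smul hc).exists_measurePreserving_quadForm_eq_norm_sq hBdet m
  have hQ := h.integrable_mul_quadForm (c • S⁻¹)
  have hsecond : ∫ y, f (φ y) * ‖y‖ ^ 2 = n * c := by
    simp_rw [← hφQ]
    rw [hφ.integral_comp_of_aestronglyMeasurable hQ.aestronglyMeasurable, h.integral_mul_quadForm]
    simp only [Matrix.smul_apply, smul_eq_mul, mul_assoc, ← mul_sum,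
      h.sum_sum_inv_mul_self hS.det_pos.ne'.isUnit]
    ring
  have hmass : ∫ y, f (φ y) = 1 := by
    rw [hφ.integral_comp_of_aestronglyMeasurable hf.aestronglyMeasurable, hf1]
  have hbath := le_integral_mul_norm_sq_of_le_const volume hρ (fun y => hf0 (φ y))
    (fun y => hfM (φ y)) ((hφ.integrable_comp hf.aestronglyMeasurable).2 hf)
    (by simpa [← hφQ, Function.comp_def] using (hφ.integrable_comp hQ.aestronglyMeasurable).2 hQ)
    (by rw [hmass, hMρ])
  rw [hmass, hsecond, hfin, mul_one] at hbath
  have hρc : n * (ρ ^ 2 / (n + 2)) ≤ n * c := by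
    calc _ = n / (n + 2) * ρ ^ 2 := by ring
      _ ≤ _ := hbath
  rw [← hcn]
  exact pow_le_pow_left₀ (by positivity) (le_of_mul_le_mul_left hρc hn) n

theorem sq_mul_pow_le_det_of_mul_le [Nonempty ι] {c : EuclideanSpace ℝ ι} {r α : ℝ}
    (h : HasSecondMoments f m S) (hα : 0 < α) (hr : 0 < r) (hf0 : ∀ x, 0 ≤ f x)
    (hf : Integrable f) (hf1 : ∫ x, f x = 1)
    (hfα : ∀ x, α * f x ≤ (volume.real (ball c r))⁻¹) :
    α ^ 2 * (r ^ 2 / (Fintype.card ι + 2)) ^ Fintype.card ι ≤ S.det := by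
  set n := Fintype.card ι
  have hfin : Module.finrank ℝ (EuclideanSpace ℝ ι) = n := finrank_euclideanSpace
  set ρ := α ^ (n : ℝ)⁻¹ * r
  have hρ : 0 < ρ := by positivity
  have hρn : ρ ^ n = α * r ^ n := by
    rw [mul_pow, Real.rpow_inv_natCast_pow hα.le Fintype.card_ne_zero]
  have hvol : volume.real (ball (0 : EuclideanSpace ℝ ι) ρ) = α * volume.real (ball c r) := by
    rw [measureReal_ball_eq_pow_mul _ _ hρ.le, measureReal_ball_eq_pow_mul _ _ hr.le, hfin, hρn,
      mul_assoc]
  have hVr := measureReal_ball_pos volume c hr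
  calc α ^ 2 * (r ^ 2 / (n + 2)) ^ n = (ρ ^ 2 / (n + 2)) ^ n := by
        rw [div_pow, div_pow, ← pow_mul, ← pow_mul, mul_comm 2 n, pow_mul, pow_mul, hρn]
        ring
    _ ≤ S.det := h.pow_le_det_of_le_const hρ.le hf0 (M := (α * volume.real (ball c r))⁻¹)
        (fun x => by rw [mul_inv, le_inv_mul_iff₀ hα]; exact hfα x) hf hf1
        (by rw [hvol, inv_mul_cancel₀ (by positivity)])

theorem det_le_of_uniformBall [Nonempty ι] {c : EuclideanSpace ℝ ι} {r : ℝ} (hr : 0 < r)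
    (h : HasSecondMoments ((ball c r).indicator fun _ => (volume.real (ball c r))⁻¹) c S) :
    S.det ≤ (r ^ 2 / (Fintype.card ι + 2)) ^ Fintype.card ι := by
  set n := Fintype.card ι
  have hfin : Module.finrank ℝ (EuclideanSpace ℝ ι) = n := finrank_euclideanSpace
  set V := volume.real (ball c r) with hVdef
  have hV : 0 < V := measureReal_ball_pos volume c hr
  have hu0 (x : EuclideanSpace ℝ ι) : 0 ≤ (ball c r).indicator (fun _ => V⁻¹) x :=
    Set.indicator_nonneg (fun _ _ => by positivity) x
  have hu1 : ∫ x, (ball c r).indicator (fun _ => V⁻¹) x = 1 := by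
    rw [integral_indicator measurableSet_ball, setIntegral_const, smul_eq_mul,
      mul_inv_cancel₀ hV.ne']
  have hQ (x : EuclideanSpace ℝ ι) :
      (⇑x - ⇑c) ⬝ᵥ (1 : Matrix ι ι ℝ) *ᵥ (⇑x - ⇑c) = ‖x - c‖ ^ 2 := by
    rw [one_mulVec, ← real_inner_self_eq_norm_sq, EuclideanSpace.inner_eq_star_dotProduct,
      star_trivial, WithLp.ofLp_sub]
  have htrace : S.trace = n * (r ^ 2 / (n + 2)) := by
    calc S.trace = ∑ i, ∑ k, (1 : Matrix ι ι ℝ) i k * S i k := by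
          simp [trace, one_apply]
      _ = ∫ x, (ball c r).indicator (fun _ => V⁻¹) x * ‖x - c‖ ^ 2 := by
          simp_rw [← h.integral_mul_quadForm, hQ]
      _ = n * (r ^ 2 / (n + 2)) := by
          rw [indicator_const_mul_eq (g := fun x => ‖x - c‖ ^ 2),
            integral_indicator measurableSet_ball, integral_const_mul,
            integral_norm_sub_sq_ball volume c hr.le, hfin, ← hVdef]
          field_simp
  have := (h.posDef hu0 (by simp [hu1])).posSemidef.det_le_trace_div_card_pow
  rwa [htrace, mul_div_cancel_left₀ _ (by simp [n, Fintype.card_ne_zero])] at this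

end HasSecondMoments

theorem stmt_9_general (d m : ℕ) (hd : 0 < d)
    (μ : EuclideanSpace ℝ (Fin d)) (r : ℝ) (hr : 0 < r)
    (u : EuclideanSpace ℝ (Fin d) → ℝ)
    (hu : u = (Metric.ball μ r).indicator
        fun _ => ((volume (Metric.ball μ r)).toReal)⁻¹)
    (v : Fin m → EuclideanSpace ℝ (Fin d) → ℝ) (α : Fin m → ℝ)
    (hα : ∀ i, 0 < α i) (hαsum : ∑ i, α i = 1)
    (hmix : ∀ x, u x = ∑ i, α i * v i x)
    (hv_nonneg : ∀ i x, 0 ≤ v i x)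
    (hv_int : ∀ i, Integrable (v i)) (hv_prob : ∀ i, ∫ x, v i x = 1)
    (mv : Fin m → Fin d → ℝ)
    (Sv : Fin m → Matrix (Fin d) (Fin d) ℝ)
    (hSv_int : ∀ j i k,
      Integrable (fun x : EuclideanSpace ℝ (Fin d) => v j x * (x i - mv j i) * (x k - mv j k)))
    (hSv : ∀ j i k, Sv j i k = ∫ x, v j x * (x i - mv j i) * (x k - mv j k))
    (Su : Matrix (Fin d) (Fin d) ℝ)
    (hSu : ∀ i k, Su i k = ∫ x, u x * (x i - μ i) * (x k - μ k)) :
    ∑ j, Real.sqrt (Sv j).det ≥ Real.sqrt Su.det := by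
  have : Nonempty (Fin d) := ⟨⟨0, hd⟩⟩
  rw [← measureReal_def] at hu
  subst hu
  set K := (r ^ 2 / (Fintype.card (Fin d) + 2)) ^ Fintype.card (Fin d)
  have hSu_le : Su.det ≤ K := (hasSecondMoments_indicator_ball hSu).det_le_of_uniformBall hr
  have hSv_ge (j : Fin m) : α j * √K ≤ √(Sv j).det := by
    have hdom (x : EuclideanSpace ℝ (Fin d)) : α j * v j x ≤ (volume.real (ball μ r))⁻¹ :=
      calc α j * v j x ≤ ∑ i, α i * v i x :=
            single_le_sum (f := fun i => α i * v i x)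
              (fun i _ => mul_nonneg (hα i).le (hv_nonneg i x)) (mem_univ j)
        _ = _ := (hmix x).symm
        _ ≤ _ := Set.indicator_le_self' (fun _ _ => by positivity) x
    rw [← Real.sqrt_sq (hα j).le, ← Real.sqrt_mul (sq_nonneg _)]
    exact Real.sqrt_le_sqrt <| HasSecondMoments.sq_mul_pow_le_det_of_mul_le ⟨hSv_int j, hSv j⟩
      (hα j) hr (hv_nonneg j) (hv_int j) (hv_prob j) hdom
  calc √Su.det ≤ √K := Real.sqrt_le_sqrt hSu_le
    _ = ∑ j, α j * √K := by rw [← sum_mul, hαsum, one_mul]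
    _ ≤ ∑ j, √(Sv j).det := sum_le_sum fun j _ => hSv_ge j

theorem stmt_9 (d m : ℕ) (hd : 0 < d) (hm : 0 < m)
    (μ : EuclideanSpace ℝ (Fin d)) (r : ℝ) (hr : 0 < r)
    (u : EuclideanSpace ℝ (Fin d) → ℝ)
    (hu : u = (Metric.ball μ r).indicator
        fun _ => ((volume (Metric.ball μ r)).toReal)⁻¹)
    (v : Fin m → EuclideanSpace ℝ (Fin d) → ℝ) (α : Fin m → ℝ)
    (hα : ∀ i, 0 < α i) (hαsum : ∑ i, α i = 1)
    (hmix : ∀ x, u x = ∑ i, α i * v i x)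
    (hv_meas : ∀ i, Measurable (v i)) (hv_nonneg : ∀ i x, 0 ≤ v i x)
    (hv_int : ∀ i, Integrable (v i)) (hv_prob : ∀ i, ∫ x, v i x = 1)
    (mv : Fin m → Fin d → ℝ) (hmv : ∀ j i, mv j i = ∫ x, x i * v j x)
    (Sv : Fin m → Matrix (Fin d) (Fin d) ℝ)
    (hSv_int : ∀ j i k,
      Integrable (fun x : EuclideanSpace ℝ (Fin d) => v j x * (x i - mv j i) * (x k - mv j k)))
    (hSv : ∀ j i k, Sv j i k = ∫ x, v j x * (x i - mv j i) * (x k - mv j k))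
    (Su : Matrix (Fin d) (Fin d) ℝ)
    (hSu : ∀ i k, Su i k = ∫ x, u x * (x i - μ i) * (x k - μ k)) :
    ∑ j, Real.sqrt (Sv j).det ≥ Real.sqrt Su.det :=
  stmt_9_general d m hd μ r hr u hu v α hα hαsum hmix hv_nonneg hv_int hv_prob mv Sv hSv_int hSv Su
    hSu
end

section
/- Let $f = \alpha_1 g_1 + \cdots + \alpha_m g_m$ be a mixture of probability densities on $\mathbb{R}^d$ with positive weights summing to 1, all with finite second moments and positive definite covariances. Let $\tilde{f}$ and $\tilde{g}_i$ be the Gaussian densities with the same means and covariances as $f$ and $g_i$ respectively. If $|\Sigma_f|^{1/2} > |\Sigma_{g_1}|^{1/2} + \cdots + |\Sigma_{g_m}|^{1/2}$, then $KL(f \,\|\, \tilde{f}) > KL(f \,\|\, \alpha_1 \tilde{g}_1 + \cdots + \alpha_m \tilde{g}_m)$. -/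
/-!
The difference `KL(f ‖ f̃) - KL(f ‖ ∑ αⱼ g̃ⱼ)` equals `∫ f log (∑ αⱼ g̃ⱼ) - ∫ f log f̃`. A density
`p` whose second moments about `μ` form `Σ` has cross-entropy
`∫ p log φ_{μ,Σ} = -(d/2)(log 2π + 1) - log |Σ|^{1/2}` against the Gaussian `φ_{μ,Σ}`, because
the expected Mahalanobis term is `tr (Σ⁻¹ Σ) = d`. On the `j`-th component bound
`log (∑ αₖ g̃ₖ) ≥ log (αⱼ g̃ⱼ)`; this gives
`∫ f log (∑ αⱼ g̃ⱼ) ≥ ∑ αⱼ log (αⱼ / sⱼ) - (d/2)(log 2π + 1)` with `sⱼ = |Σⱼ|^{1/2}`. Jensen's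
inequality for `log` bounds `∑ αⱼ log (αⱼ / sⱼ)` below by `-log ∑ sⱼ`, which is strictly larger
than `-log |Σ_f|^{1/2}` by the pseudo-volume condition.
-/

open MeasureTheory Real Matrix Finset

section FiniteSums

variable {ι : Type*} (s : Finset ι)

lemma sum_mul_log_le_mul_log_sum {w c : ι → ℝ} (hw : ∀ i ∈ s, 0 ≤ w i)
    (hc : ∀ i ∈ s, 0 < c i) :
    ∑ i ∈ s, w i * log (c i) ≤ (∑ i ∈ s, w i) * log (∑ i ∈ s, c i) := by
  rw [sum_mul]
  refine sum_le_sum fun i hi => mul_le_mul_of_nonneg_left ?_ (hw i hi)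
  exact log_le_log (hc i hi) (single_le_sum (fun j hj => (hc j hj).le) hi)

lemma sum_mul_sub_log_le_log_sum {w c : ι → ℝ} (hw : ∀ i ∈ s, 0 < w i)
    (hw1 : ∑ i ∈ s, w i = 1) (hc : ∀ i ∈ s, 0 < c i) :
    ∑ i ∈ s, w i * (log (c i) - log (w i)) ≤ log (∑ i ∈ s, c i) := by
  have jensen := strictConcaveOn_log_Ioi.concaveOn.le_map_sum (fun i hi => (hw i hi).le) hw1
    (p := fun i => c i / w i) fun i hi => div_pos (hc i hi) (hw i hi)
  calc ∑ i ∈ s, w i * (log (c i) - log (w i))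
      = ∑ i ∈ s, w i • log (c i / w i) :=
        sum_congr rfl fun i hi => by rw [smul_eq_mul, log_div (hc i hi).ne' (hw i hi).ne']
    _ ≤ log (∑ i ∈ s, w i • (c i / w i)) := jensen
    _ = log (∑ i ∈ s, c i) :=
        congrArg log <| sum_congr rfl fun i hi => by
          rw [smul_eq_mul, mul_div_cancel₀ _ (hw i hi).ne']

end FiniteSums

lemma mul_log_div_sub_mul_log_div (a : ℝ) {b c : ℝ} (hb : 0 < b) (hc : 0 < c) :
    a * log (a / b) - a * log (a / c) = a * log c - a * log b := by
  rcases eq_or_ne a 0 with rfl | ha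
  · simp
  · rw [log_div ha hb.ne', log_div ha hc.ne']
    ring

section KullbackLeibler

variable {α : Type*} [MeasurableSpace α] {ν : Measure α} {f p q : α → ℝ}

lemma integrable_mul_log_of_integrable_mul_log_div (hp : ∀ x, 0 < p x) (hq : ∀ x, 0 < q x)
    (hfp : Integrable (fun x => f x * log (f x / p x)) ν)
    (hfq : Integrable (fun x => f x * log (f x / q x)) ν)
    (hlogp : Integrable (fun x => f x * log (p x)) ν) :
    Integrable (fun x => f x * log (q x)) ν := by
  refine ((hfp.sub hfq).add hlogp).congr (ae_of_all _ fun x => ?_)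
  simp only [Pi.add_apply, Pi.sub_apply, mul_log_div_sub_mul_log_div (f x) (hp x) (hq x)]
  ring

lemma integral_mul_log_div_sub_integral_mul_log_div (hp : ∀ x, 0 < p x) (hq : ∀ x, 0 < q x)
    (hfp : Integrable (fun x => f x * log (f x / p x)) ν)
    (hfq : Integrable (fun x => f x * log (f x / q x)) ν)
    (hlogp : Integrable (fun x => f x * log (p x)) ν) :
    ∫ x, f x * log (f x / p x) ∂ν - ∫ x, f x * log (f x / q x) ∂ν
      = ∫ x, f x * log (q x) ∂ν - ∫ x, f x * log (p x) ∂ν := by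
  rw [← integral_sub hfp hfq,
    ← integral_sub (integrable_mul_log_of_integrable_mul_log_div hp hq hfp hfq hlogp) hlogp]
  simp only [mul_log_div_sub_mul_log_div _ (hp _) (hq _)]

section Mixture

variable {m : Type*} [Fintype m] {w : m → ℝ} {g : m → α → ℝ}

lemma integrable_of_eq_sum_mul (hg_int : ∀ j, Integrable (g j) ν)
    (hf : ∀ x, f x = ∑ j, w j * g j x) : Integrable f ν :=
  (integrable_finsetSum _ fun j _ => (hg_int j).const_mul (w j)).congr
    (ae_of_all _ fun x => (hf x).symm)

lemma integral_eq_one_of_eq_sum_mul (hg_int : ∀ j, Integrable (g j) ν)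
    (hg1 : ∀ j, ∫ x, g j x ∂ν = 1) (hw1 : ∑ j, w j = 1) (hf : ∀ x, f x = ∑ j, w j * g j x) :
    ∫ x, f x ∂ν = 1 := by
  simp only [hf]
  rw [integral_finsetSum _ fun j _ => (hg_int j).const_mul (w j)]
  simp only [integral_const_mul, hg1, mul_one, hw1]

lemma sum_mul_log_add_integral_le_integral_mul_log_sum {h : m → α → ℝ} (hw : ∀ j, 0 < w j) (hg : ∀ j x, 0 ≤ g j x)
    (hg_int : ∀ j, Integrable (g j) ν) (hg1 : ∀ j, ∫ x, g j x ∂ν = 1) (hh : ∀ j x, 0 < h j x)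
    (hgh : ∀ j, Integrable (fun x => g j x * log (h j x)) ν)
    (hf : ∀ x, f x = ∑ j, w j * g j x)
    (hfh : Integrable (fun x => f x * log (∑ j, w j * h j x)) ν) :
    ∑ j, w j * (log (w j) + ∫ x, g j x * log (h j x) ∂ν)
      ≤ ∫ x, f x * log (∑ j, w j * h j x) ∂ν := by
  have hterm : ∀ j, Integrable (fun x => w j * (g j x * log (w j * h j x))) ν := fun j => by
    refine (((hg_int j).const_mul (log (w j))).add (hgh j)).const_mul (w j) |>.congr
      (ae_of_all _ fun x => ?_)
    simp only [Pi.add_apply, log_mul (hw j).ne' (hh j x).ne']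
    ring
  have hsum : ∑ j, w j * (log (w j) + ∫ x, g j x * log (h j x) ∂ν)
      = ∫ x, ∑ j, w j * (g j x * log (w j * h j x)) ∂ν := by
    rw [integral_finsetSum _ fun j _ => hterm j]
    refine sum_congr rfl fun j _ => ?_
    rw [integral_const_mul]
    simp only [log_mul (hw j).ne' (hh j _).ne', mul_add]
    rw [integral_add ((hg_int j).mul_const _) (hgh j), integral_mul_const, hg1 j, one_mul,
      ← mul_add]
  rw [hsum]
  refine integral_mono (integrable_finsetSum _ fun j _ => hterm j) hfh fun x => ?_
  have key := sum_mul_log_le_mul_log_sum univ (w := fun j => w j * g j x)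
    (c := fun j => w j * h j x) (fun j _ => mul_nonneg (hw j).le (hg j x))
    (fun j _ => mul_pos (hw j) (hh j x))
  simpa only [hf x, mul_assoc] using key

end Mixture

end KullbackLeibler

section Covariance

variable {n : Type*} [Fintype n] {ν : Measure (n → ℝ)} {p : (n → ℝ) → ℝ} {μ : n → ℝ}

lemma mul_quadForm_eq_sum (B : Matrix n n ℝ) (x : n → ℝ) :
    p x * ((x - μ) ⬝ᵥ B *ᵥ (x - μ))
      = ∑ i, ∑ k, B i k * (p x * (x i - μ i) * (x k - μ k)) := by
  simp only [dotProduct, mulVec, Pi.sub_apply, mul_sum]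
  exact sum_congr rfl fun i _ => sum_congr rfl fun k _ => by ring

lemma integrable_mul_quadForm
    (hint : ∀ i k, Integrable (fun x => p x * (x i - μ i) * (x k - μ k)) ν) (B : Matrix n n ℝ) :
    Integrable (fun x => p x * ((x - μ) ⬝ᵥ B *ᵥ (x - μ))) ν := by
  simp only [mul_quadForm_eq_sum]
  exact integrable_finsetSum _ fun i _ =>
    integrable_finsetSum _ fun k _ => (hint i k).const_mul _

lemma integral_mul_quadForm_inv [DecidableEq n] {S : Matrix n n ℝ}
    (hint : ∀ i k, Integrable (fun x => p x * (x i - μ i) * (x k - μ k)) ν)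
    (hS : ∀ i k, S i k = ∫ x, p x * (x i - μ i) * (x k - μ k) ∂ν) (hdet : IsUnit S.det) :
    ∫ x, p x * ((x - μ) ⬝ᵥ S⁻¹ *ᵥ (x - μ)) ∂ν = Fintype.card n := by
  have hsymm : ∀ i k, S k i = S i k := fun i k => by
    simp only [hS]
    congr 1 with x
    ring
  calc ∫ x, p x * ((x - μ) ⬝ᵥ S⁻¹ *ᵥ (x - μ)) ∂ν
      = ∑ i, ∑ k, S⁻¹ i k * S k i := by
        simp only [mul_quadForm_eq_sum]
        refine (integral_finsetSum _ fun i _ =>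
          integrable_finsetSum _ fun k _ => (hint i k).const_mul _).trans ?_
        refine sum_congr rfl fun i _ => ?_
        refine (integral_finsetSum _ fun k _ => (hint i k).const_mul _).trans ?_
        exact sum_congr rfl fun k _ => by rw [integral_const_mul, hsymm, hS]
    _ = trace (S⁻¹ * S) := by simp only [trace, Matrix.diag, mul_apply]
    _ = Fintype.card n := by simp [nonsing_inv_mul S hdet]

end Covariance

section Gaussian

variable {n : Type*} [Fintype n] [DecidableEq n]

noncomputable def gaussianDensity (μ : n → ℝ) (S : Matrix n n ℝ) (x : n → ℝ) : ℝ :=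
  (2 * π) ^ (-(Fintype.card n : ℝ) / 2) * S.det ^ (-(1 : ℝ) / 2) *
    exp (-(1 / 2) * ((x - μ) ⬝ᵥ S⁻¹ *ᵥ (x - μ)))

variable {μ : n → ℝ} {S : Matrix n n ℝ}

lemma gaussianDensity_pos (hS : 0 < S.det) (x : n → ℝ) : 0 < gaussianDensity μ S x := by
  unfold gaussianDensity
  positivity

lemma log_gaussianDensity (hS : 0 < S.det) (x : n → ℝ) :
    log (gaussianDensity μ S x) = -(Fintype.card n / 2) * log (2 * π) - log √S.det
      - (1 / 2) * ((x - μ) ⬝ᵥ S⁻¹ *ᵥ (x - μ)) := by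
  have h2π : 0 < 2 * π := by positivity
  rw [gaussianDensity, log_mul (by positivity) (exp_pos _).ne', log_mul (by positivity)
    (by positivity), log_rpow h2π, log_rpow hS, log_exp, log_sqrt hS.le]
  ring

lemma mul_log_gaussianDensity_eq (hS : 0 < S.det) (p : (n → ℝ) → ℝ) (x : n → ℝ) :
    p x * log (gaussianDensity μ S x)
      = (-(Fintype.card n / 2) * log (2 * π) - log √S.det) * p x
        - (1 / 2) * (p x * ((x - μ) ⬝ᵥ S⁻¹ *ᵥ (x - μ))) := by
  rw [log_gaussianDensity hS]
  ring

variable {ν : Measure (n → ℝ)} {p : (n → ℝ) → ℝ}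

lemma integrable_mul_log_gaussianDensity (hS : 0 < S.det) (hp : Integrable p ν)
    (hint : ∀ i k, Integrable (fun x => p x * (x i - μ i) * (x k - μ k)) ν) :
    Integrable (fun x => p x * log (gaussianDensity μ S x)) ν := by
  simp only [mul_log_gaussianDensity_eq hS]
  exact (hp.const_mul _).sub ((integrable_mul_quadForm hint _).const_mul _)

lemma integral_mul_log_gaussianDensity (hS : 0 < S.det) (hp : Integrable p ν)
    (hp1 : ∫ x, p x ∂ν = 1)
    (hint : ∀ i k, Integrable (fun x => p x * (x i - μ i) * (x k - μ k)) ν)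
    (hcov : ∀ i k, S i k = ∫ x, p x * (x i - μ i) * (x k - μ k) ∂ν) :
    ∫ x, p x * log (gaussianDensity μ S x) ∂ν
      = -(Fintype.card n / 2) * (log (2 * π) + 1) - log √S.det := by
  simp only [mul_log_gaussianDensity_eq hS]
  rw [integral_sub (hp.const_mul _) ((integrable_mul_quadForm hint _).const_mul _),
    integral_const_mul, integral_const_mul, hp1,
    integral_mul_quadForm_inv hint hcov hS.ne'.isUnit]
  ring

end Gaussian

theorem stmt_15_general (d m : ℕ) (hm : 0 < m)
    (g : Fin m → (Fin d → ℝ) → ℝ) (α : Fin m → ℝ)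
    (hα : ∀ i, 0 < α i) (hαsum : ∑ i, α i = 1)
    (hg_nonneg : ∀ i x, 0 ≤ g i x)
    (hg_int : ∀ i, Integrable (g i)) (hg_prob : ∀ i, ∫ x, g i x = 1)
    (f : (Fin d → ℝ) → ℝ) (hf : ∀ x, f x = ∑ i, α i * g i x)
    -- means and covariances of the components
    (μg : Fin m → Fin d → ℝ)
    (Sg : Fin m → Matrix (Fin d) (Fin d) ℝ)
    (hSg_int : ∀ j i k, Integrable (fun x : Fin d → ℝ => g j x * (x i - μg j i) * (x k - μg j k)))
    (hSg : ∀ j i k, Sg j i k = ∫ x, g j x * (x i - μg j i) * (x k - μg j k))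
    (hSg_pd : ∀ j, (Sg j).PosDef)
    -- mean and covariance of the mixture
    (μf : Fin d → ℝ)
    (Sf : Matrix (Fin d) (Fin d) ℝ)
    (hSf_int : ∀ i k, Integrable (fun x : Fin d → ℝ => f x * (x i - μf i) * (x k - μf k)))
    (hSf : ∀ i k, Sf i k = ∫ x, f x * (x i - μf i) * (x k - μf k))
    -- the matched Gaussian densities
    (ft : (Fin d → ℝ) → ℝ)
    (hft : ∀ x, ft x = (2 * π) ^ (-(d : ℝ) / 2) * Sf.det ^ (-(1 : ℝ) / 2) *
        Real.exp (-(1 / 2) * ((x - μf) ⬝ᵥ Sf⁻¹.mulVec (x - μf))))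
    (gt : Fin m → (Fin d → ℝ) → ℝ)
    (hgt : ∀ j x, gt j x = (2 * π) ^ (-(d : ℝ) / 2) * (Sg j).det ^ (-(1 : ℝ) / 2) *
        Real.exp (-(1 / 2) * ((x - μg j) ⬝ᵥ (Sg j)⁻¹.mulVec (x - μg j))))
    -- integrability of all the Kullback-Leibler integrands
    (hKL1 : Integrable (fun x => f x * Real.log (f x / ft x)))
    (hKL2 : Integrable (fun x => f x * Real.log (f x / ∑ j, α j * gt j x)))
    -- the pseudo-volume condition
    (hvol : Real.sqrt Sf.det > ∑ j, Real.sqrt (Sg j).det) :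
    (∫ x, f x * Real.log (f x / ft x)) >
      ∫ x, f x * Real.log (f x / ∑ j, α j * gt j x) := by
  have hne : (univ : Finset (Fin m)).Nonempty := univ_nonempty_iff.2 (Fin.pos_iff_nonempty.1 hm)
  have hdetf : 0 < Sf.det := sqrt_pos.1 ((sum_nonneg fun j _ => sqrt_nonneg _).trans_lt hvol)
  have hdetg : ∀ j, 0 < (Sg j).det := fun j => (hSg_pd j).det_pos
  obtain rfl : ft = gaussianDensity μf Sf :=
    funext fun x => by rw [hft, gaussianDensity, Fintype.card_fin]
  obtain rfl : gt = fun j => gaussianDensity (μg j) (Sg j) :=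
    funext₂ fun j x => by rw [hgt, gaussianDensity, Fintype.card_fin]
  have hf_int := integrable_of_eq_sum_mul hg_int hf
  have hf_prob := integral_eq_one_of_eq_sum_mul hg_int hg_prob hαsum hf
  have hq_pos : ∀ x, 0 < ∑ j, α j * gaussianDensity (μg j) (Sg j) x := fun x =>
    sum_pos (fun j _ => mul_pos (hα j) (gaussianDensity_pos (hdetg j) x)) hne
  have hlogft_int := integrable_mul_log_gaussianDensity hdetf hf_int hSf_int
  have hlower := sum_mul_log_add_integral_le_integral_mul_log_sum hα hg_nonneg hg_int hg_prob
    (fun j => gaussianDensity_pos (hdetg j))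
    (fun j => integrable_mul_log_gaussianDensity (hdetg j) (hg_int j) (hSg_int j)) hf
    (integrable_mul_log_of_integrable_mul_log_div (gaussianDensity_pos hdetf) hq_pos hKL1 hKL2
      hlogft_int)
  have hgibbs := sum_mul_sub_log_le_log_sum univ (fun j _ => hα j) hαsum
    fun j _ => sqrt_pos.2 (hdetg j)
  have hvol_log := log_lt_log (sum_pos (fun j _ => sqrt_pos.2 (hdetg j)) hne) hvol
  rw [gt_iff_lt, ← sub_pos, integral_mul_log_div_sub_integral_mul_log_div
    (gaussianDensity_pos hdetf) hq_pos hKL1 hKL2 hlogft_int,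
    integral_mul_log_gaussianDensity hdetf hf_int hf_prob hSf_int hSf]
  simp only [fun j => integral_mul_log_gaussianDensity (hdetg j) (hg_int j) (hg_prob j)
    (hSg_int j) (hSg j)] at hlower
  simp only [mul_add, mul_sub, sum_add_distrib, sum_sub_distrib, ← sum_mul, hαsum] at hlower hgibbs
  linarith

theorem stmt_15 (d m : ℕ) (hd : 0 < d) (hm : 0 < m)
    (g : Fin m → (Fin d → ℝ) → ℝ) (α : Fin m → ℝ)
    (hα : ∀ i, 0 < α i) (hαsum : ∑ i, α i = 1)
    (hg_meas : ∀ i, Measurable (g i)) (hg_nonneg : ∀ i x, 0 ≤ g i x)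
    (hg_int : ∀ i, Integrable (g i)) (hg_prob : ∀ i, ∫ x, g i x = 1)
    (f : (Fin d → ℝ) → ℝ) (hf : ∀ x, f x = ∑ i, α i * g i x)
    -- means and covariances of the components
    (μg : Fin m → Fin d → ℝ) (hμg : ∀ j i, μg j i = ∫ x, x i * g j x)
    (Sg : Fin m → Matrix (Fin d) (Fin d) ℝ)
    (hSg_int : ∀ j i k, Integrable (fun x : Fin d → ℝ => g j x * (x i - μg j i) * (x k - μg j k)))
    (hSg : ∀ j i k, Sg j i k = ∫ x, g j x * (x i - μg j i) * (x k - μg j k))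
    (hSg_pd : ∀ j, (Sg j).PosDef)
    -- mean and covariance of the mixture
    (μf : Fin d → ℝ) (hμf : ∀ i, μf i = ∫ x, x i * f x)
    (Sf : Matrix (Fin d) (Fin d) ℝ)
    (hSf_int : ∀ i k, Integrable (fun x : Fin d → ℝ => f x * (x i - μf i) * (x k - μf k)))
    (hSf : ∀ i k, Sf i k = ∫ x, f x * (x i - μf i) * (x k - μf k))
    (hSf_pd : Sf.PosDef)
    -- the matched Gaussian densities
    (ft : (Fin d → ℝ) → ℝ)
    (hft : ∀ x, ft x = (2 * π) ^ (-(d : ℝ) / 2) * Sf.det ^ (-(1 : ℝ) / 2) *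
        Real.exp (-(1 / 2) * ((x - μf) ⬝ᵥ Sf⁻¹.mulVec (x - μf))))
    (gt : Fin m → (Fin d → ℝ) → ℝ)
    (hgt : ∀ j x, gt j x = (2 * π) ^ (-(d : ℝ) / 2) * (Sg j).det ^ (-(1 : ℝ) / 2) *
        Real.exp (-(1 / 2) * ((x - μg j) ⬝ᵥ (Sg j)⁻¹.mulVec (x - μg j))))
    -- integrability of all the Kullback-Leibler integrands
    (hKL1 : Integrable (fun x => f x * Real.log (f x / ft x)))
    (hKL2 : Integrable (fun x => f x * Real.log (f x / ∑ j, α j * gt j x)))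
    -- the pseudo-volume condition
    (hvol : Real.sqrt Sf.det > ∑ j, Real.sqrt (Sg j).det) :
    (∫ x, f x * Real.log (f x / ft x)) >
      ∫ x, f x * Real.log (f x / ∑ j, α j * gt j x) :=
  stmt_15_general d m hm g α hα hαsum hg_nonneg hg_int hg_prob f hf μg Sg hSg_int hSg hSg_pd μf Sf
    hSf_int hSf ft hft gt hgt hKL1 hKL2 hvol
end

section
/- Let $f$ be an elliptical unimodal probability density on $\mathbb{R}^d$, i.e. $f(x) = p\{(x-\mu)^T\Sigma^{-1}(x-\mu)\}$ for a non-increasing positive function $p$ on $[0,\infty)$ and positive definite $\Sigma$. Then for every $\epsilon > 0$ there exist $n \ge 1$, radii $r_1, \dots, r_n > 0$, and weights $b_j = r_j^d/\sum_i r_i^d$, such that the mixture $g_n = \sum_{j=1}^n b_j u_j$ of uniform densities $u_j(x) \propto \mathbb{1}_{(x-\mu)^T\Sigma^{-1}(x-\mu) < r_j^2}$ satisfies $\int |g_n(x) - f(x)|\,dx < \epsilon$. -/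
/-!
Write `Q x = (x - μ)ᵀ Σ⁻¹ (x - μ)`. Since `p` is non-increasing, every superlevel set `{c < f}`
with `0 < c < p(0+)` lies between the open and the closed ellipsoid `Q < r²`, `Q ≤ r²` for some
`r > 0`, and the shell `Q = r²` is null because the volume of `{Q < t² r²}` is `t^d` times that of
`{Q < r²}`. Stacking the superlevel sets at heights `δ, 2δ, …, Nδ` gives a layer-cake staircase
`φ = δ ∑ⱼ 𝟙{Q < rⱼ²}` with `φ ≤ f`, and `f ≤ φ + δ` wherever `f ≤ (N + 1) δ`; letting `δ → 0`
and `N δ → p(0+)`, dominated convergence gives `∫ φ → 1`. Because the ellipsoid of radius `r` has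
volume `r^d` times that of the unit one, `φ / ∫ φ` is exactly the mixture with weights
`rⱼ^d / ∑ᵢ rᵢ^d`, and `‖φ / ∫ φ - f‖₁ ≤ 2 (1 - ∫ φ)` whenever `0 ≤ φ ≤ f`.
-/

open MeasureTheory Matrix Finset Set Filter Topology Pointwise

theorem integral_abs_inv_integral_mul_sub_le {α : Type*} [MeasurableSpace α] {ν : Measure α}
    {f φ : α → ℝ} (hf : Integrable f ν) (hf₁ : ∫ x, f x ∂ν = 1) (hφ : Integrable φ ν)
    (hφ₀ : 0 ≤ᵐ[ν] φ) (hφf : φ ≤ᵐ[ν] f) (hpos : 0 < ∫ x, φ x ∂ν) :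
    ∫ x, |(∫ y, φ y ∂ν)⁻¹ * φ x - f x| ∂ν ≤ 2 * (1 - ∫ x, φ x ∂ν) := by
  set J := ∫ x, φ x ∂ν
  have hJ1 : 1 ≤ J⁻¹ := one_le_inv₀ hpos |>.2 (hf₁ ▸ integral_mono_ae hφ hf hφf)
  have hbound : ∀ᵐ x ∂ν, |J⁻¹ * φ x - f x| ≤ (J⁻¹ - 1) * φ x + (f x - φ x) := by
    filter_upwards [hφ₀, hφf] with x h0 h1
    calc |J⁻¹ * φ x - f x| = |(J⁻¹ - 1) * φ x + (φ x - f x)| := by ring_nf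
      _ ≤ |(J⁻¹ - 1) * φ x| + |φ x - f x| := abs_add_le _ _
      _ = (J⁻¹ - 1) * φ x + (f x - φ x) := by
        rw [abs_of_nonneg (mul_nonneg (by linarith) h0), abs_of_nonpos (by linarith)]; ring
  calc ∫ x, |J⁻¹ * φ x - f x| ∂ν ≤ ∫ x, (J⁻¹ - 1) * φ x + (f x - φ x) ∂ν :=
        integral_mono_ae ((hφ.const_mul _).sub hf).abs ((hφ.const_mul _).add (hf.sub hφ)) hbound
    _ = 2 * (1 - J) := by
      rw [integral_add (g := fun x => f x - φ x) (hφ.const_mul _) (hf.sub hφ),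
        integral_const_mul, integral_sub hf hφ, hf₁]
      field_simp
      ring

theorem tendsto_integral_of_ae_le_of_eventually_le_add {α : Type*} [MeasurableSpace α]
    {ν : Measure α} {f : α → ℝ} {φ : ℕ → α → ℝ} {δ : ℕ → ℝ} (hf : Integrable f ν)
    (hφ : ∀ m, AEStronglyMeasurable (φ m) ν) (hφ₀ : ∀ m, 0 ≤ᵐ[ν] φ m) (hφf : ∀ m, φ m ≤ᵐ[ν] f)
    (hδ : Tendsto δ atTop (𝓝 0)) (hfφ : ∀ᵐ x ∂ν, ∀ᶠ m in atTop, f x ≤ φ m x + δ m) :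
    Tendsto (fun m => ∫ x, φ m x ∂ν) atTop (𝓝 (∫ x, f x ∂ν)) := by
  have hbound : ∀ᵐ x ∂ν, ∀ m, 0 ≤ φ m x ∧ φ m x ≤ f x :=
    ae_all_iff.2 fun m => (hφ₀ m).and (hφf m)
  refine tendsto_integral_of_dominated_convergence f hφ hf
    (fun m => (ae_all_iff.1 hbound m).mono fun x hx => ?_) ?_
  · rw [Real.norm_of_nonneg hx.1]
    exact hx.2
  · filter_upwards [hbound, hfφ] with x hx hxφ
    refine tendsto_of_tendsto_of_tendsto_of_le_of_le' (g := fun m => f x - δ m) ?_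
      tendsto_const_nhds (hxφ.mono fun m hm => by linarith) (Eventually.of_forall fun m => (hx m).2)
    simpa using tendsto_const_nhds.sub hδ

section Staircase

variable {δ : ℝ} (y : ℝ) (N : ℕ)

theorem sum_ite_succ_mul_lt (hδ : 0 < δ) :
    ∑ j : Fin N, (if ((j : ℝ) + 1) * δ < y then (1 : ℝ) else 0) = (min N (⌈y / δ⌉₊ - 1) : ℕ) := by
  have hiff : ∀ j : ℕ, ((j : ℝ) + 1) * δ < y ↔ j < ⌈y / δ⌉₊ - 1 := fun j => by
    rw [← lt_div_iff₀ hδ, ← Nat.cast_succ, ← Nat.lt_ceil]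
    omega
  rw [Fin.sum_univ_eq_sum_range (fun j => if ((j : ℝ) + 1) * δ < y then (1 : ℝ) else 0),
    sum_boole, filter_congr fun j _ => hiff j, ← card_range (min _ _)]
  congr 2
  ext j
  simp only [mem_filter, Finset.mem_range]
  omega

theorem mul_sum_ite_succ_mul_lt_le (hδ : 0 < δ) (hy : 0 ≤ y) :
    δ * ∑ j : Fin N, (if ((j : ℝ) + 1) * δ < y then (1 : ℝ) else 0) ≤ y := by
  rw [sum_ite_succ_mul_lt y N hδ, ← le_div_iff₀' hδ]
  calc ((min N (⌈y / δ⌉₊ - 1) : ℕ) : ℝ) ≤ ((⌈y / δ⌉₊ - 1 : ℕ) : ℝ) := by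
        gcongr; exact min_le_right _ _
    _ ≤ y / δ := by
      have := Nat.ceil_lt_add_one (div_nonneg hy hδ.le)
      rcases Nat.eq_zero_or_pos ⌈y / δ⌉₊ with h | h
      · simp only [h, Nat.zero_sub, Nat.cast_zero]; positivity
      · rw [Nat.cast_sub h]; push_cast; linarith

theorem le_mul_sum_ite_succ_mul_lt_add (hδ : 0 < δ) (hyN : y ≤ (N + 1) * δ) :
    y ≤ δ * ∑ j : Fin N, (if ((j : ℝ) + 1) * δ < y then (1 : ℝ) else 0) + δ := by
  rw [sum_ite_succ_mul_lt y N hδ, ← mul_add_one, ← div_le_iff₀' hδ]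
  rcases min_cases N (⌈y / δ⌉₊ - 1) with ⟨h, -⟩ | ⟨h, -⟩
  · rw [h, div_le_iff₀ hδ]; exact hyN
  · rw [h]
    calc y / δ ≤ ⌈y / δ⌉₊ := Nat.le_ceil _
      _ ≤ ((⌈y / δ⌉₊ - 1 : ℕ) : ℝ) + 1 := by norm_cast; omega

end Staircase

theorem Matrix.smul_dotProduct_mulVec_smul {n R : Type*} [Fintype n] [CommRing R]
    (A : Matrix n n R) (c : R) (v : n → R) :
    (c • v) ⬝ᵥ A *ᵥ (c • v) = c ^ 2 * (v ⬝ᵥ A *ᵥ v) := by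
  rw [mulVec_smul, smul_dotProduct, dotProduct_smul, smul_eq_mul, smul_eq_mul]
  ring

theorem Matrix.PosSemidef.dotProduct_mulVec_self_nonneg {n : Type*} [Fintype n]
    {A : Matrix n n ℝ} (hA : A.PosSemidef) (v : n → ℝ) : 0 ≤ v ⬝ᵥ A *ᵥ v := by
  simpa using hA.dotProduct_mulVec_nonneg v

section Ellipsoid

variable {d : ℕ} (A : Matrix (Fin d) (Fin d) ℝ) (μ : Fin d → ℝ)

def ellipsoid (s : ℝ) : Set (Fin d → ℝ) := {x | (x - μ) ⬝ᵥ A *ᵥ (x - μ) < s}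

theorem isOpen_ellipsoid (s : ℝ) : IsOpen (ellipsoid A μ s) :=
  isOpen_lt (by simp only [dotProduct, mulVec]; fun_prop) continuous_const

theorem ellipsoid_eq_vadd (s : ℝ) : ellipsoid A μ s = μ +ᵥ ellipsoid A 0 s := by
  ext x
  rw [mem_vadd_set_iff_neg_vadd_mem, vadd_eq_add, neg_add_eq_sub]
  simp [ellipsoid]

theorem ellipsoid_zero_sq_mul {r : ℝ} (hr : 0 < r) (s : ℝ) :
    ellipsoid A 0 (r ^ 2 * s) = r • ellipsoid A 0 s := by
  ext v
  rw [mem_smul_set_iff_inv_smul_mem₀ hr.ne']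
  simp only [ellipsoid, mem_ofPred_eq, sub_zero, smul_dotProduct_mulVec_smul, inv_pow]
  rw [inv_mul_lt_iff₀ (by positivity)]

theorem volume_ellipsoid_sq_mul {r : ℝ} (hr : 0 < r) (s : ℝ) :
    volume (ellipsoid A μ (r ^ 2 * s)) = ENNReal.ofReal (r ^ d) * volume (ellipsoid A μ s) := by
  rw [ellipsoid_eq_vadd, ellipsoid_eq_vadd A μ s, measure_vadd, measure_vadd,
    ellipsoid_zero_sq_mul A hr, Measure.addHaar_smul_of_nonneg _ hr.le, Module.finrank_fin_fun]

theorem volume_ellipsoid_pos {s : ℝ} (hs : 0 < s) : 0 < volume (ellipsoid A μ s) :=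
  (isOpen_ellipsoid A μ s).measure_pos volume ⟨μ, by simpa [ellipsoid] using hs⟩

theorem volume_setOf_dotProduct_mulVec_eq_zero {s : ℝ} (hs : 0 < s)
    (hfin : volume (ellipsoid A μ s) ≠ ⊤) :
    volume {x | (x - μ) ⬝ᵥ A *ᵥ (x - μ) = s} = 0 := by
  set C := volume (ellipsoid A μ s)
  have hbound : ∀ t : ℝ, 1 < t →
      volume {x | (x - μ) ⬝ᵥ A *ᵥ (x - μ) = s} ≤ ENNReal.ofReal (t ^ d) * C - C := by
    intro t ht
    have hs_lt : s < t ^ 2 * s := lt_mul_left hs (by nlinarith)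
    have hsub : ellipsoid A μ s ⊆ ellipsoid A μ (t ^ 2 * s) := fun x hx => lt_trans hx hs_lt
    rw [← volume_ellipsoid_sq_mul A μ (by linarith) s,
      ← measure_sdiff hsub (isOpen_ellipsoid A μ s).measurableSet.nullMeasurableSet hfin]
    refine measure_mono fun x hx => ⟨?_, ?_⟩
    · exact (le_of_eq hx).trans_lt hs_lt
    · exact (le_of_eq hx.symm).not_gt
  have hlim : Tendsto (fun t : ℝ => ENNReal.ofReal (t ^ d) * C - C) (𝓝[>] 1) (𝓝 0) := by
    have hcont : Tendsto (fun t : ℝ => ENNReal.ofReal (t ^ d) * C) (𝓝 1) (𝓝 C) := by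
      simpa using ENNReal.Tendsto.mul_const
        ((ENNReal.continuous_ofReal.comp (continuous_pow d)).tendsto 1) (Or.inr hfin)
    simpa using ENNReal.Tendsto.sub (hcont.mono_left nhdsWithin_le_nhds)
      (tendsto_const_nhds (x := C)) (Or.inl hfin)
  exact le_antisymm (ge_of_tendsto hlim (eventually_nhdsWithin_of_forall hbound)) bot_le

noncomputable def ellipsoidStaircase {n : ℕ} (δ : ℝ) (r : Fin n → ℝ) (x : Fin d → ℝ) : ℝ :=
  δ * ∑ j, (ellipsoid A μ (r j ^ 2)).indicator (fun _ => (1 : ℝ)) x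

variable {A μ}

theorem ellipsoidStaircase_nonneg {n : ℕ} {δ : ℝ} (hδ : 0 ≤ δ) (r : Fin n → ℝ) (x : Fin d → ℝ) :
    0 ≤ ellipsoidStaircase A μ δ r x :=
  mul_nonneg hδ (sum_nonneg fun _ _ => indicator_nonneg (fun _ _ => zero_le_one) x)

theorem integrable_ellipsoidStaircase {n : ℕ} (δ : ℝ) {r : Fin n → ℝ}
    (hr : ∀ j, volume (ellipsoid A μ (r j ^ 2)) ≠ ⊤) :
    Integrable (ellipsoidStaircase A μ δ r) :=
  (integrable_finsetSum _ fun j _ =>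
    (integrable_indicator_iff (isOpen_ellipsoid A μ _).measurableSet).2
      (integrableOn_const (hr j))).const_mul δ

theorem integral_ellipsoidStaircase {n : ℕ} (δ : ℝ) {r : Fin n → ℝ}
    (hr : ∀ j, volume (ellipsoid A μ (r j ^ 2)) ≠ ⊤) :
    ∫ x, ellipsoidStaircase A μ δ r x = δ * ∑ j, (volume (ellipsoid A μ (r j ^ 2))).toReal := by
  simp only [ellipsoidStaircase]
  rw [integral_const_mul, integral_finsetSum]
  · simp_rw [integral_indicator_const _ (isOpen_ellipsoid A μ _).measurableSet, measureReal_def,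
      smul_eq_mul, mul_one]
  · exact fun j _ => (integrable_indicator_iff (isOpen_ellipsoid A μ _).measurableSet).2
      (integrableOn_const (hr j))

theorem sum_mul_inv_volume_mul_indicator_ellipsoid_eq {n : ℕ} {r : Fin n → ℝ} (hr : ∀ j, 0 < r j)
    (hC₀ : volume (ellipsoid A μ 1) ≠ 0) (hC : volume (ellipsoid A μ 1) ≠ ⊤) {δ : ℝ} (hδ : δ ≠ 0)
    (x : Fin d → ℝ) :
    ∑ j, (r j ^ d / ∑ i, r i ^ d) * ((volume (ellipsoid A μ (r j ^ 2))).toReal⁻¹ *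
      (ellipsoid A μ (r j ^ 2)).indicator (fun _ => (1 : ℝ)) x) =
    (∫ y, ellipsoidStaircase A μ δ r y)⁻¹ * ellipsoidStaircase A μ δ r x := by
  set C := (volume (ellipsoid A μ 1)).toReal
  have hC₀' : C ≠ 0 := ENNReal.toReal_ne_zero.2 ⟨hC₀, hC⟩
  have hvol : ∀ j, (volume (ellipsoid A μ (r j ^ 2))).toReal = r j ^ d * C := fun j => by
    rw [← mul_one (r j ^ 2), volume_ellipsoid_sq_mul A μ (hr j), ENNReal.toReal_mul,
      ENNReal.toReal_ofReal (pow_pos (hr j) d).le]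
  have hfin : ∀ j, volume (ellipsoid A μ (r j ^ 2)) ≠ ⊤ := fun j => by
    rw [← mul_one (r j ^ 2), volume_ellipsoid_sq_mul A μ (hr j)]
    exact ENNReal.mul_ne_top ENNReal.ofReal_ne_top hC
  rw [integral_ellipsoidStaircase δ hfin]
  simp only [ellipsoidStaircase, hvol, ← sum_mul, mul_sum]
  refine sum_congr rfl fun j _ => ?_
  have hrj : r j ^ d ≠ 0 := (pow_pos (hr j) d).ne'
  field_simp

end Ellipsoid

section EllipticalDensity

variable {d : ℕ} {A : Matrix (Fin d) (Fin d) ℝ} {μ : Fin d → ℝ} {p : ℝ → ℝ}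
  {f : (Fin d → ℝ) → ℝ}

theorem volume_ellipsoid_lt_top (hA : A.PosSemidef) (hp : AntitoneOn p (Ici 0))
    (hf : ∀ x, f x = p ((x - μ) ⬝ᵥ A *ᵥ (x - μ))) (hfi : Integrable f) {s : ℝ} (hs : 0 ≤ s)
    (hps : 0 < p s) : volume (ellipsoid A μ s) < ⊤ := by
  refine (measure_mono fun x (hx : _ < s) => ?_).trans_lt (hfi.measure_norm_ge_lt_top hps)
  have hQ := hA.dotProduct_mulVec_self_nonneg (x - μ)
  rw [mem_ofPred_eq, hf, Real.norm_eq_abs]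
  exact (hp hQ hs hx.le).trans (le_abs_self _)

theorem bddAbove_setOf_lt_of_integrable (hd : 0 < d) (hA : A.PosSemidef) (hp : AntitoneOn p (Ici 0))
    (hf : ∀ x, f x = p ((x - μ) ⬝ᵥ A *ᵥ (x - μ))) (hfi : Integrable f) {c : ℝ} (hc : 0 < c) :
    BddAbove {t | 0 ≤ t ∧ c < p t} := by
  have : Nonempty (Fin d) := ⟨⟨0, hd⟩⟩
  by_contra hunb
  have hcf : ∀ x, c ≤ ‖f x‖ := by
    intro x
    have hQ := hA.dotProduct_mulVec_self_nonneg (x - μ)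
    obtain ⟨t, ⟨ht, hct⟩, hQt⟩ := not_bddAbove_iff.1 hunb ((x - μ) ⬝ᵥ A *ᵥ (x - μ))
    rw [hf, Real.norm_eq_abs]
    exact hct.le.trans ((hp hQ ht hQt.le).trans (le_abs_self _))
  have htop := hfi.measure_norm_ge_lt_top hc
  rw [show {x | c ≤ ‖f x‖} = univ from eq_univ_of_forall hcf,
    measure_univ_of_isAddLeftInvariant] at htop
  exact htop.ne rfl

theorem exists_setOf_lt_ae_eq_ellipsoid (hd : 0 < d) (hA : A.PosSemidef)
    (hp_pos : ∀ t, 0 ≤ t → 0 < p t) (hp : AntitoneOn p (Ici 0))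
    (hf : ∀ x, f x = p ((x - μ) ⬝ᵥ A *ᵥ (x - μ))) (hfi : Integrable f) {c u : ℝ} (hc : 0 < c)
    (hu : 0 < u) (hcu : c < p u) :
    ∃ r > 0, {x | c < f x} =ᵐ[volume] ellipsoid A μ (r ^ 2) := by
  have hI := bddAbove_setOf_lt_of_integrable hd hA hp hf hfi hc
  set s := sSup {t | 0 ≤ t ∧ c < p t}
  have hI₀ : {t | 0 ≤ t ∧ c < p t}.Nonempty := ⟨u, hu.le, hcu⟩
  have hs : 0 < s := hu.trans_le (le_csSup hI ⟨hu.le, hcu⟩)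
  have hsub : ellipsoid A μ s ⊆ {x | c < f x} := fun x (hx : _ < s) => by
    obtain ⟨t, ⟨ht, hct⟩, hxt⟩ := exists_lt_of_lt_csSup hI₀ hx
    rw [mem_ofPred_eq, hf]
    exact hct.trans_le (hp (hA.dotProduct_mulVec_self_nonneg _) ht hxt.le)
  have hnull := volume_setOf_dotProduct_mulVec_eq_zero A μ hs
    (volume_ellipsoid_lt_top hA hp hf hfi hs.le (hp_pos s hs.le)).ne
  refine ⟨√s, Real.sqrt_pos.2 hs, ?_⟩
  rw [Real.sq_sqrt hs.le, ae_eq_set, sdiff_eq_empty.2 hsub, measure_empty]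
  refine ⟨measure_mono_null (fun x ⟨(hcx : c < f x), (hxs : ¬ _ < s)⟩ => ?_) hnull, rfl⟩
  rw [hf] at hcx
  exact le_antisymm (le_csSup hI ⟨hA.dotProduct_mulVec_self_nonneg _, hcx⟩) (not_lt.1 hxs)

theorem ae_ellipsoidStaircase_le_and_le_add {δ : ℝ} (hδ : 0 < δ) {N : ℕ} {r : Fin N → ℝ}
    (hf₀ : ∀ x, 0 ≤ f x)
    (hr : ∀ j : Fin N, {x | ((j : ℝ) + 1) * δ < f x} =ᵐ[volume] ellipsoid A μ (r j ^ 2)) :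
    ∀ᵐ x, ellipsoidStaircase A μ δ r x ≤ f x ∧
      (f x ≤ (N + 1) * δ → f x ≤ ellipsoidStaircase A μ δ r x + δ) := by
  have hmem : ∀ᵐ x, ∀ j : Fin N, x ∈ ellipsoid A μ (r j ^ 2) ↔ ((j : ℝ) + 1) * δ < f x :=
    ae_all_iff.2 fun j => (hr j).mem_iff.mono fun x hx => hx.symm
  filter_upwards [hmem] with x hx
  have hcount : ellipsoidStaircase A μ δ r x =
      δ * ∑ j : Fin N, if ((j : ℝ) + 1) * δ < f x then (1 : ℝ) else 0 := by
    refine congrArg (δ * ·) (sum_congr rfl fun j _ => ?_)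
    split_ifs with h
    · exact indicator_of_mem ((hx j).2 h) _
    · exact indicator_of_notMem (mt (hx j).1 h) _
  rw [hcount]
  exact ⟨mul_sum_ite_succ_mul_lt_le _ _ hδ (hf₀ x), le_mul_sum_ite_succ_mul_lt_add _ _ hδ⟩

theorem exists_ellipsoidStaircase_approx (hd : 0 < d) (hA : A.PosSemidef)
    (hp_pos : ∀ t, 0 ≤ t → 0 < p t) (hp : AntitoneOn p (Ici 0))
    (hf : ∀ x, f x = p ((x - μ) ⬝ᵥ A *ᵥ (x - μ))) (hfi : Integrable f) {u : ℝ} (hu : 0 < u)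
    (N : ℕ) :
    ∃ r : Fin N → ℝ, (∀ j, 0 < r j) ∧ ∀ᵐ x,
      ellipsoidStaircase A μ (p u / (N + 1)) r x ≤ f x ∧ (u ≤ (x - μ) ⬝ᵥ A *ᵥ (x - μ) →
        f x ≤ ellipsoidStaircase A μ (p u / (N + 1)) r x + p u / (N + 1)) := by
  set δ := p u / (N + 1)
  have hδ : 0 < δ := div_pos (hp_pos u hu.le) (by positivity)
  have hδu : (N + 1) * δ = p u := mul_div_cancel₀ _ (by positivity)
  have hlevel : ∀ j : Fin N, ((j : ℝ) + 1) * δ < p u := fun j => by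
    rw [← hδu]
    gcongr
    exact_mod_cast j.isLt
  choose r hr_pos hr using fun j : Fin N =>
    exists_setOf_lt_ae_eq_ellipsoid hd hA hp_pos hp hf hfi (by positivity) hu (hlevel j)
  refine ⟨r, hr_pos, ?_⟩
  filter_upwards [ae_ellipsoidStaircase_le_and_le_add hδ
    (fun x => (hf x).symm ▸ (hp_pos _ (hA.dotProduct_mulVec_self_nonneg _)).le) hr]
    with x ⟨hle, hadd⟩
  refine ⟨hle, fun hux => hadd ?_⟩
  rw [hδu, hf]
  exact hp hu.le (hA.dotProduct_mulVec_self_nonneg _) hux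

theorem exists_ellipsoidStaircase_le_integral_gt (hd : 0 < d) (hA : A.PosDef)
    (hp_pos : ∀ t, 0 ≤ t → 0 < p t) (hp : AntitoneOn p (Ici 0))
    (hf : ∀ x, f x = p ((x - μ) ⬝ᵥ A *ᵥ (x - μ))) (hfi : Integrable f) (hf₁ : ∫ x, f x = 1)
    {η : ℝ} (hη : η < 1) :
    ∃ (n : ℕ) (r : Fin (n + 1) → ℝ) (δ : ℝ), 0 < δ ∧ (∀ j, 0 < r j) ∧
      ellipsoidStaircase A μ δ r ≤ᵐ[volume] f ∧ η < ∫ x, ellipsoidStaircase A μ δ r x := by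
  have : Nonempty (Fin d) := ⟨⟨0, hd⟩⟩
  -- Capping the levels below `p (u m)` rather than `p 0` keeps the radii positive even if `p` jumps
  -- at `0`; every `x ≠ μ` has `u m ≤ Q x` for large `m`, where the staircase is `δ m`-close to `f`.
  set u : ℕ → ℝ := fun m => 1 / ((m : ℝ) + 1)
  set δ : ℕ → ℝ := fun m => p (u m) / (((m + 1 : ℕ) : ℝ) + 1)
  have hu : ∀ m, 0 < u m := fun m => by positivity
  have hδ : ∀ m, 0 < δ m := fun m => div_pos (hp_pos _ (hu m).le) (by positivity)
  choose r hr_pos hr using fun m =>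
    exists_ellipsoidStaircase_approx hd hA.posSemidef hp_pos hp hf hfi (hu m) (m + 1)
  have hδ_lim : Tendsto δ atTop (𝓝 0) := by
    refine squeeze_zero (g := fun m => p 0 / (((m + 1 : ℕ) : ℝ) + 1)) (fun m => (hδ m).le)
      (fun m => ?_) (tendsto_const_nhds.div_atTop (Tendsto.atTop_add
        (tendsto_natCast_atTop_atTop.comp (tendsto_add_atTop_nat 1)) tendsto_const_nhds))
    exact div_le_div_of_nonneg_right (hp self_mem_Ici (hu m).le (hu m).le) (by positivity)
  have hconv : Tendsto (fun m => ∫ x, ellipsoidStaircase A μ (δ m) (r m) x) atTop (𝓝 1) := by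
    rw [← hf₁]
    refine tendsto_integral_of_ae_le_of_eventually_le_add hfi (fun m => ?_)
      (fun m => ae_of_all _ (ellipsoidStaircase_nonneg (hδ m).le _)) (fun m => (hr m).mono
      fun x hx => hx.1) hδ_lim ?_
    · exact (integrable_ellipsoidStaircase _ fun j => (volume_ellipsoid_lt_top hA.posSemidef hp hf
        hfi (sq_nonneg _) (hp_pos _ (sq_nonneg _))).ne).aestronglyMeasurable
    · filter_upwards [ae_all_iff.2 hr, volume.ae_ne μ] with x hx hxμ
      have hQ : 0 < (x - μ) ⬝ᵥ A *ᵥ (x - μ) := by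
        simpa using hA.dotProduct_mulVec_pos (sub_ne_zero.2 hxμ)
      filter_upwards [tendsto_one_div_add_atTop_nhds_zero_nat.eventually (gt_mem_nhds hQ)]
        with m hm using (hx m).2 hm.le
  obtain ⟨m, hm⟩ := (hconv.eventually (lt_mem_nhds hη)).exists
  exact ⟨m, r m, δ m, hδ m, hr_pos m, (hr m).mono fun x hx => hx.1, hm⟩

end EllipticalDensity

theorem stmt_19 (d : ℕ) (hd : 0 < d)
    (μ : Fin d → ℝ) (S : Matrix (Fin d) (Fin d) ℝ) (hS : S.PosDef)
    (p : ℝ → ℝ) (hp_pos : ∀ y : ℝ, 0 ≤ y → 0 < p y) (hp_mono : AntitoneOn p (Ici 0))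
    (f : (Fin d → ℝ) → ℝ)
    (hf : ∀ x, f x = p ((x - μ) ⬝ᵥ S⁻¹.mulVec (x - μ)))
    (hf_int : Integrable f) (hf_prob : ∫ x, f x = 1)
    (ε : ℝ) (hε : 0 < ε) :
    ∃ (n : ℕ) (_ : 1 ≤ n) (r : Fin n → ℝ), (∀ j, 0 < r j) ∧
      ∫ x, |(∑ j, (r j ^ d / ∑ i, r i ^ d) *
          ((volume {y : Fin d → ℝ | (y - μ) ⬝ᵥ S⁻¹.mulVec (y - μ) < r j ^ 2}).toReal⁻¹ *
            ({y : Fin d → ℝ | (y - μ) ⬝ᵥ S⁻¹.mulVec (y - μ) < r j ^ 2}.indicator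
              (fun _ => (1 : ℝ)) x))) - f x| < ε := by
  have hvol_fin : ∀ s, 0 ≤ s → volume (ellipsoid S⁻¹ μ s) ≠ ⊤ := fun s hs =>
    (volume_ellipsoid_lt_top hS.inv.posSemidef hp_mono hf hf_int hs (hp_pos s hs)).ne
  obtain ⟨n, r, δ, hδ, hr, hle, hgt⟩ := exists_ellipsoidStaircase_le_integral_gt hd hS.inv hp_pos
    hp_mono hf hf_int hf_prob (max_lt one_pos (by linarith : 1 - ε / 2 < 1))
  obtain ⟨hpos, hclose⟩ := max_lt_iff.1 hgt
  refine ⟨n + 1, by omega, r, hr, ?_⟩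
  have hmix := sum_mul_inv_volume_mul_indicator_ellipsoid_eq hr
    (volume_ellipsoid_pos S⁻¹ μ one_pos).ne' (hvol_fin 1 zero_le_one) hδ.ne'
  simp only [ellipsoid] at hmix
  simp only [hmix]
  calc _ ≤ 2 * (1 - ∫ x, ellipsoidStaircase S⁻¹ μ δ r x) :=
        integral_abs_inv_integral_mul_sub_le hf_int hf_prob
          (integrable_ellipsoidStaircase δ fun j => hvol_fin _ (sq_nonneg _))
          (ae_of_all _ (ellipsoidStaircase_nonneg hδ.le r)) hle hpos
    _ < ε := by linarith
end
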